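/- arXiv:1001.1220 — 3 statements merged into one kernel-verified Lean document; each statement's English description precedes it below -/
import Mathlib

section
/- Set lct := min_ν (k_ν + 1)/d_ν (the log canonical threshold) and S := {γ ∈ {1,…,N} : (k_γ + 1)/d_γ = lct}. Then S is a chain, d̂_γ = 0 for every γ ∈ S that is not an end of S, and every end γ of S satisfies v(γ) ≥ 3 or d̂_γ > 0. -/
open Matrix Finset

namespace ProxSetting

variable {N : ℕ}

/-- The combinatorial axioms for a proximity matrix. -/
def IsProximityMatrix (P : Matrix (Fin N) (Fin N) ℤ) : Prop :=
  (∀ μ, P μ μ = 1) ∧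
  (∀ μ ν : Fin N, μ < ν → P μ ν = 0) ∧
  (∀ μ ν : Fin N, ν < μ → P μ ν = 0 ∨ P μ ν = -1) ∧
  (∀ μ : Fin N, (∃ ρ, ρ < μ) →
      (Finset.univ.filter fun ν => ν < μ ∧ P μ ν = -1).Nonempty ∧
      (Finset.univ.filter fun ν => ν < μ ∧ P μ ν = -1).card ≤ 2) ∧
  (∀ μ ν ρ : Fin N, ν < ρ → P μ ν = -1 → P μ ρ = -1 → P ρ ν = -1) ∧
  (∀ ν ρ μ₁ μ₂ : Fin N, ν < ρ →
      P μ₁ ν = -1 → P μ₁ ρ = -1 → P μ₂ ν = -1 → P μ₂ ρ = -1 → μ₁ = μ₂)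

/-- `w(ν) = (PᵀP)_{νν}`. -/
def wght (P : Matrix (Fin N) (Fin N) ℤ) (ν : Fin N) : ℤ := (Pᵀ * P) ν ν

/-- The dual graph: distinct `μ, ν` are adjacent iff `(PᵀP)_{μν} = -1`. -/
def graph (P : Matrix (Fin N) (Fin N) ℤ) : SimpleGraph (Fin N) where
  Adj μ ν := μ ≠ ν ∧ (Pᵀ * P) μ ν = -1
  symm := by
    constructor
    intro μ ν h
    refine ⟨h.1.symm, ?_⟩
    have : (Pᵀ * P) ν μ = (Pᵀ * P) μ ν := by
      simp only [Matrix.mul_apply, Matrix.transpose_apply]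
      exact Finset.sum_congr rfl fun x _ => mul_comm _ _
    rw [this]; exact h.2
  loopless := ⟨fun μ h => h.1 rfl⟩

instance (P : Matrix (Fin N) (Fin N) ℤ) : DecidableRel (graph P).Adj :=
  fun μ ν => inferInstanceAs (Decidable (μ ≠ ν ∧ (Pᵀ * P) μ ν = -1))

lemma graph_adj {P : Matrix (Fin N) (Fin N) ℤ} {x y : Fin N} :
    (graph P).Adj x y ↔ x ≠ y ∧ (Pᵀ * P) x y = -1 := Iff.rfl

/-- `d* = d̂·Q` where `Q = P⁻¹`. -/
noncomputable def dstar (P : Matrix (Fin N) (Fin N) ℤ) (dh : Fin N → ℤ) (ν : Fin N) : ℤ :=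
  ∑ μ, dh μ * P⁻¹ μ ν

/-- `d = d̂·Q·Qᵀ`. -/
noncomputable def dd (P : Matrix (Fin N) (Fin N) ℤ) (dh : Fin N → ℤ) (ν : Fin N) : ℤ :=
  ∑ ρ, dstar P dh ρ * P⁻¹ ν ρ

/-- `k_ν = Σ_μ q_{νμ}`. -/
noncomputable def kk (P : Matrix (Fin N) (Fin N) ℤ) (ν : Fin N) : ℤ :=
  ∑ μ, P⁻¹ ν μ

/-- `λ(a,ν) = (a + k_ν + 1)/d_ν`. -/
noncomputable def lam (P : Matrix (Fin N) (Fin N) ℤ) (dh : Fin N → ℤ) (a : ℤ) (ν : Fin N) :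
    ℚ :=
  ((a : ℚ) + (kk P ν : ℚ) + 1) / (dd P dh ν : ℚ)

/-- A vector is antinef if every entry of `f·Pᵀ·P` is nonnegative. -/
def Antinef (P : Matrix (Fin N) (Fin N) ℤ) (f : Fin N → ℤ) : Prop :=
  ∀ ν, 0 ≤ ∑ μ, f μ * (Pᵀ * P) μ ν

/-- `ξ_f = min_ν λ(f_ν, ν)`. -/
noncomputable def xiF [NeZero N] (P : Matrix (Fin N) (Fin N) ℤ) (dh : Fin N → ℤ)
    (f : Fin N → ℤ) : ℚ :=
  Finset.univ.inf'
    (Finset.univ_nonempty_iff.mpr ⟨⟨0, Nat.pos_of_ne_zero (NeZero.ne N)⟩⟩)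
    fun ν => lam P dh (f ν) ν

/-- graph distance from a vertex to a set of vertices. -/
noncomputable def distSet (P : Matrix (Fin N) (Fin N) ℤ) (ν : Fin N) (S : Finset (Fin N)) :
    ℕ :=
  sInf {n | ∃ μ ∈ S, (graph P).dist ν μ = n}

/-- `α(γ,ν) = k_ν + 1 − d_ν·(k_γ+1)/d_γ`. -/
noncomputable def alpha (P : Matrix (Fin N) (Fin N) ℤ) (dh : Fin N → ℤ) (γ ν : Fin N) : ℚ :=
  (kk P ν : ℚ) + 1 - (dd P dh ν : ℚ) * ((kk P γ : ℚ) + 1) / (dd P dh γ : ℚ)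

end ProxSetting

open ProxSetting Matrix Finset

namespace ProxSetting

variable {N : ℕ}

lemma finStrong {C : Fin N → Prop} (h : ∀ μ : Fin N, (∀ ν, ν < μ → C ν) → C μ) (μ : Fin N) :
    C μ := by
  obtain ⟨m, hm⟩ := μ
  induction m using Nat.strong_induction_on with
  | _ m ih =>
    exact h ⟨m, hm⟩ (fun ν hν => by
      obtain ⟨v, hv⟩ := ν
      exact ih v (Fin.mk_lt_mk.mp hν) hv)

def prox (P : Matrix (Fin N) (Fin N) ℤ) (μ : Fin N) : Finset (Fin N) :=
  Finset.univ.filter fun ν => ν < μ ∧ P μ ν = -1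

variable {P : Matrix (Fin N) (Fin N) ℤ}

lemma mem_prox {μ ν : Fin N} : ν ∈ prox P μ ↔ ν < μ ∧ P μ ν = -1 := by
  simp [prox]

lemma det_one (hP : IsProximityMatrix P) : P.det = 1 := by
  have h : P.BlockTriangular (OrderDual.toDual : Fin N → (Fin N)ᵒᵈ) := by
    intro i j hij
    exact hP.2.1 i j hij
  rw [Matrix.det_of_lowerTriangular P h]
  simp [hP.1]

lemma isUnit_det (hP : IsProximityMatrix P) : IsUnit P.det := by
  rw [det_one hP]; exact isUnit_one

lemma PQ (hP : IsProximityMatrix P) : P * P⁻¹ = 1 := Matrix.mul_nonsing_inv P (isUnit_det hP)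
lemma QP (hP : IsProximityMatrix P) : P⁻¹ * P = 1 := Matrix.nonsing_inv_mul P (isUnit_det hP)

lemma Q_rec (hP : IsProximityMatrix P) (μ ρ : Fin N) :
    P⁻¹ μ ρ = (if μ = ρ then 1 else 0) + ∑ ν ∈ prox P μ, P⁻¹ ν ρ := by
  have h1 : (P * P⁻¹) μ ρ = (1 : Matrix (Fin N) (Fin N) ℤ) μ ρ := by rw [PQ hP]
  rw [Matrix.mul_apply, Matrix.one_apply] at h1
  have hsplit : ∑ ν, P μ ν * P⁻¹ ν ρ
      = P μ μ * P⁻¹ μ ρ + ∑ ν ∈ univ.erase μ, P μ ν * P⁻¹ ν ρ := by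
    rw [← Finset.add_sum_erase _ _ (mem_univ μ)]
  have h2 : ∑ ν ∈ univ.erase μ, P μ ν * P⁻¹ ν ρ
      = ∑ ν ∈ prox P μ, -(P⁻¹ ν ρ) := by
    rw [show (univ.erase μ : Finset (Fin N)) = univ.filter (· ≠ μ) from
      (Finset.filter_ne' univ μ).symm]
    rw [prox, Finset.sum_filter, Finset.sum_filter]
    apply Finset.sum_congr rfl
    intro ν _
    by_cases hlt : ν < μ
    · rcases hP.2.2.1 μ ν hlt with h0 | hm1
      · simp [h0, hlt, ne_of_lt hlt]
      · simp [hm1, hlt, ne_of_lt hlt]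
    · by_cases heq : ν = μ
      · simp [heq, hlt]
      · have hgt : μ < ν := lt_of_le_of_ne (not_lt.mp hlt) (Ne.symm heq)
        simp [hP.2.1 μ ν hgt, heq, hlt]
  rw [hsplit, hP.1, one_mul, h2, Finset.sum_neg_distrib] at h1
  linarith [h1]

end ProxSetting

namespace ProxSetting

variable {N : ℕ} {P : Matrix (Fin N) (Fin N) ℤ}

lemma Q_upper (hP : IsProximityMatrix P) {μ ρ : Fin N} (h : μ < ρ) : P⁻¹ μ ρ = 0 := by
  induction μ using finStrong with
  | h μ ih =>
    rw [Q_rec hP]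
    rw [if_neg (ne_of_lt h)]
    rw [Finset.sum_eq_zero, add_zero]
    intro ν hν
    exact ih ν (mem_prox.mp hν).1 (lt_trans (mem_prox.mp hν).1 h)

lemma Q_diag (hP : IsProximityMatrix P) (μ : Fin N) : P⁻¹ μ μ = 1 := by
  rw [Q_rec hP, if_pos rfl]
  rw [Finset.sum_eq_zero, add_zero]
  intro ν hν
  exact Q_upper hP (mem_prox.mp hν).1

lemma Q_nonneg (hP : IsProximityMatrix P) (μ ρ : Fin N) : 0 ≤ P⁻¹ μ ρ := by
  induction μ using finStrong with
  | h μ ih =>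
    rw [Q_rec hP]
    have : (0:ℤ) ≤ ∑ ν ∈ prox P μ, P⁻¹ ν ρ :=
      Finset.sum_nonneg (fun ν hν => ih ν (mem_prox.mp hν).1)
    by_cases h : μ = ρ
    · subst h; simp; linarith
    · simp [h]; linarith

lemma prox_nonempty (hP : IsProximityMatrix P) {μ : Fin N} (h : ∃ ρ, ρ < μ) :
    (prox P μ).Nonempty := (hP.2.2.2.1 μ h).1

lemma prox_card (hP : IsProximityMatrix P) {μ : Fin N} (h : ∃ ρ, ρ < μ) :
    (prox P μ).card ≤ 2 := (hP.2.2.2.1 μ h).2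

lemma Q_ge_one_of_prox (hP : IsProximityMatrix P) {μ ν : Fin N} (h : ν ∈ prox P μ) :
    1 ≤ P⁻¹ μ ν := by
  rw [Q_rec hP]
  have h1 : (1:ℤ) ≤ ∑ σ ∈ prox P μ, P⁻¹ σ ν := by
    have h0 := Finset.single_le_sum (f := fun σ => P⁻¹ σ ν)
      (fun σ _ => Q_nonneg hP σ ν) h
    change P⁻¹ ν ν ≤ _ at h0
    rw [Q_diag hP] at h0
    exact h0
  have h2 : (0:ℤ) ≤ if μ = ν then 1 else 0 := by positivity
  linarith

lemma Q_zero_col (hP : IsProximityMatrix P) [NeZero N] (μ : Fin N) : 1 ≤ P⁻¹ μ 0 := by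
  induction μ using finStrong with
  | h μ ih =>
    by_cases h0 : μ = 0
    · rw [h0, Q_diag hP]
    · have hne : (prox P μ).Nonempty :=
        prox_nonempty hP ⟨0, (Fin.pos_iff_ne_zero' μ).mpr h0⟩
      obtain ⟨ν, hν⟩ := hne
      rw [Q_rec hP]
      have h1 : (1:ℤ) ≤ ∑ σ ∈ prox P μ, P⁻¹ σ 0 := by
        calc (1:ℤ) ≤ P⁻¹ ν 0 := ih ν (mem_prox.mp hν).1
        _ ≤ ∑ σ ∈ prox P μ, P⁻¹ σ 0 :=
          Finset.single_le_sum (fun σ _ => Q_nonneg hP σ 0) hν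
      have h2 : (0:ℤ) ≤ if μ = (0 : Fin N) then 1 else 0 := by positivity
      linarith

lemma Q_chapman (hP : IsProximityMatrix P) (m μ ρ : Fin N) :
    P⁻¹ m μ * P⁻¹ μ ρ ≤ P⁻¹ m ρ := by
  induction m using finStrong with
  | h m ih =>
    by_cases hm : m = μ
    · rw [hm, Q_diag hP, one_mul]
    · have hrec1 := Q_rec hP m ρ
      have hrec2 := Q_rec hP m μ
      rw [if_neg hm] at hrec2
      have hsum : ∑ σ ∈ prox P m, P⁻¹ σ μ * P⁻¹ μ ρ ≤ ∑ σ ∈ prox P m, P⁻¹ σ ρ :=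
        Finset.sum_le_sum (fun σ hσ => ih σ (mem_prox.mp hσ).1)
    -- P⁻¹ m μ * P⁻¹ μ ρ = (∑ σ, P⁻¹ σ μ) * P⁻¹ μ ρ
      have hmμ : P⁻¹ m μ = ∑ σ ∈ prox P m, P⁻¹ σ μ := by linarith [hrec2]
      rw [hmμ, Finset.sum_mul]
      have h0 : (0:ℤ) ≤ if m = ρ then 1 else 0 := by positivity
      calc ∑ σ ∈ prox P m, P⁻¹ σ μ * P⁻¹ μ ρ ≤ ∑ σ ∈ prox P m, P⁻¹ σ ρ := hsum
      _ ≤ P⁻¹ m ρ := by rw [hrec1]; linarith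

end ProxSetting

namespace ProxSetting

variable {N : ℕ} {P : Matrix (Fin N) (Fin N) ℤ} {dh : Fin N → ℤ}

lemma dstar_mono (hP : IsProximityMatrix P) (hdh : ∀ ν, 0 ≤ dh ν) {μ ν ρ : Fin N}
    (h1 : 1 ≤ P⁻¹ μ ν) (h2 : 1 ≤ P⁻¹ ν ρ) : dstar P dh μ ≤ dstar P dh ρ := by
  apply Finset.sum_le_sum
  intro m _
  have hc : P⁻¹ m μ * (P⁻¹ μ ν * P⁻¹ ν ρ) ≤ P⁻¹ m ρ := by
    calc P⁻¹ m μ * (P⁻¹ μ ν * P⁻¹ ν ρ) = (P⁻¹ m μ * P⁻¹ μ ν) * P⁻¹ ν ρ := by ring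
    _ ≤ P⁻¹ m ν * P⁻¹ ν ρ :=
      mul_le_mul_of_nonneg_right (Q_chapman hP m μ ν) (Q_nonneg hP ν ρ)
    _ ≤ P⁻¹ m ρ := Q_chapman hP m ν ρ
  have hq : P⁻¹ m μ ≤ P⁻¹ m ρ := by
    have h3 : (1:ℤ) ≤ P⁻¹ μ ν * P⁻¹ ν ρ := one_le_mul_of_one_le_of_one_le h1 h2
    nlinarith [Q_nonneg hP m μ]
  exact mul_le_mul_of_nonneg_left hq (hdh m)

lemma kk_dstar_le_dd (hP : IsProximityMatrix P) (hdh : ∀ ν, 0 ≤ dh ν)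
    (hds : ∀ ν, 0 < dstar P dh ν) {μ ν : Fin N} (h1 : 1 ≤ P⁻¹ μ ν) :
    kk P ν * dstar P dh μ ≤ dd P dh ν := by
  rw [kk, dd, Finset.sum_mul]
  apply Finset.sum_le_sum
  intro ρ _
  by_cases h0 : P⁻¹ ν ρ = 0
  · rw [h0]; ring_nf; simp [h0]
  · have hge : 1 ≤ P⁻¹ ν ρ := by
      have := Q_nonneg hP ν ρ; omega
    have := dstar_mono hP hdh h1 hge
    have hq := Q_nonneg hP ν ρ
    calc P⁻¹ ν ρ * dstar P dh μ ≤ P⁻¹ ν ρ * dstar P dh ρ :=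
      mul_le_mul_of_nonneg_left this hq
    _ = dstar P dh ρ * P⁻¹ ν ρ := mul_comm _ _

lemma kk_rec (hP : IsProximityMatrix P) (μ : Fin N) :
    kk P μ = 1 + ∑ ν ∈ prox P μ, kk P ν := by
  rw [kk]
  have h : ∀ ρ : Fin N, P⁻¹ μ ρ = (if μ = ρ then 1 else 0) + ∑ ν ∈ prox P μ, P⁻¹ ν ρ :=
    Q_rec hP μ
  rw [Finset.sum_congr rfl (fun ρ _ => h ρ), Finset.sum_add_distrib]
  rw [Finset.sum_ite_eq univ μ (fun _ => (1:ℤ)), if_pos (mem_univ μ)]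
  rw [Finset.sum_comm]
  rfl

lemma dd_rec (hP : IsProximityMatrix P) (μ : Fin N) :
    dd P dh μ = dstar P dh μ + ∑ ν ∈ prox P μ, dd P dh ν := by
  rw [dd]
  have h : ∀ ρ : Fin N, dstar P dh ρ * P⁻¹ μ ρ
      = (if μ = ρ then dstar P dh ρ else 0) + ∑ ν ∈ prox P μ, dstar P dh ρ * P⁻¹ ν ρ := by
    intro ρ
    rw [Q_rec hP μ ρ, mul_add, Finset.mul_sum]
    congr 1
    by_cases h : μ = ρ <;> simp [h]
  rw [Finset.sum_congr rfl (fun ρ _ => h ρ), Finset.sum_add_distrib]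
  rw [Finset.sum_ite_eq univ μ (fun ρ => dstar P dh ρ), if_pos (mem_univ μ)]
  rw [Finset.sum_comm]
  rfl

lemma kk_ge_one (hP : IsProximityMatrix P) (ν : Fin N) : 1 ≤ kk P ν := by
  rw [kk]
  have := Finset.single_le_sum (f := fun ρ => P⁻¹ ν ρ)
    (fun ρ _ => Q_nonneg hP ν ρ) (mem_univ ν)
  change P⁻¹ ν ν ≤ _ at this
  rw [Q_diag hP] at this
  exact this

lemma dd_ge_kk (hP : IsProximityMatrix P) (hds : ∀ ν, 0 < dstar P dh ν) (ν : Fin N) :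
    kk P ν ≤ dd P dh ν := by
  rw [kk, dd]
  apply Finset.sum_le_sum
  intro ρ _
  have h1 : 1 ≤ dstar P dh ρ := hds ρ
  nlinarith [Q_nonneg hP ν ρ]

lemma dd_ge_one (hP : IsProximityMatrix P) (hds : ∀ ν, 0 < dstar P dh ν) (ν : Fin N) :
    1 ≤ dd P dh ν := le_trans (kk_ge_one hP ν) (dd_ge_kk hP hds ν)

end ProxSetting

namespace ProxSetting

variable {N : ℕ} {P : Matrix (Fin N) (Fin N) ℤ} {dh : Fin N → ℤ}

lemma prox_structure (hP : IsProximityMatrix P) {μ : Fin N} (hne : (prox P μ).Nonempty) :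
    (∃ ν, prox P μ = {ν}) ∨
    (∃ ν ρ, ν < ρ ∧ prox P μ = {ν, ρ} ∧ ν ∈ prox P ρ) := by
  have hcard : (prox P μ).card ≤ 2 := by
    obtain ⟨ν, hν⟩ := hne
    exact prox_card hP ⟨ν, (mem_prox.mp hν).1⟩
  have hpos : 1 ≤ (prox P μ).card := Finset.card_pos.mpr hne
  interval_cases h : (prox P μ).card
  · exact Or.inl (Finset.card_eq_one.mp h)
  · right
    obtain ⟨a, b, hab, hs⟩ := Finset.card_eq_two.mp h
    rcases lt_or_gt_of_ne hab with hlt | hgt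
    · refine ⟨a, b, hlt, hs, ?_⟩
      have ha : a ∈ prox P μ := by rw [hs]; simp
      have hb : b ∈ prox P μ := by rw [hs]; simp
      have := hP.2.2.2.2.1 μ a b hlt (mem_prox.mp ha).2 (mem_prox.mp hb).2
      exact mem_prox.mpr ⟨hlt, this⟩
    · refine ⟨b, a, hgt, by rw [hs, Finset.pair_comm], ?_⟩
      have ha : a ∈ prox P μ := by rw [hs]; simp
      have hb : b ∈ prox P μ := by rw [hs]; simp
      have := hP.2.2.2.2.1 μ b a hgt (mem_prox.mp hb).2 (mem_prox.mp ha).2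
      exact mem_prox.mpr ⟨hgt, this⟩

lemma edge_ineq (hP : IsProximityMatrix P) (hdh : ∀ ν, 0 ≤ dh ν)
    (hds : ∀ ν, 0 < dstar P dh ν) (μ : Fin N) :
    ∀ ν ∈ prox P μ, kk P μ * dd P dh ν < (kk P ν + 1) * dd P dh μ ∧
      kk P ν * dd P dh μ < (kk P μ + 1) * dd P dh ν := by
  induction μ using finStrong with
  | h μ ih =>
    intro ν hν
    have hFν : kk P ν * dstar P dh μ ≤ dd P dh ν :=
      kk_dstar_le_dd hP hdh hds (Q_ge_one_of_prox hP hν)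
    have ha : 1 ≤ dstar P dh μ := hds μ
    have hkν := kk_ge_one hP ν
    have hdν := dd_ge_one hP hds ν
    rcases prox_structure hP ⟨ν, hν⟩ with ⟨ν0, hs⟩ | ⟨ν0, ρ0, hlt, hs, hpr⟩
    · have hνeq : ν = ν0 := by rw [hs] at hν; exact Finset.mem_singleton.mp hν
      subst hνeq
      have hk := kk_rec hP μ
      have hd := dd_rec (dh := dh) hP μ
      rw [hs, Finset.sum_singleton] at hk hd
      constructor <;> nlinarith
    · have hν0 : ν0 ∈ prox P μ := by rw [hs]; simp
      have hρ0 : ρ0 ∈ prox P μ := by rw [hs]; simp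
      have hFν0 : kk P ν0 * dstar P dh μ ≤ dd P dh ν0 :=
        kk_dstar_le_dd hP hdh hds (Q_ge_one_of_prox hP hν0)
      have hFρ0 : kk P ρ0 * dstar P dh μ ≤ dd P dh ρ0 :=
        kk_dstar_le_dd hP hdh hds (Q_ge_one_of_prox hP hρ0)
      have hk := kk_rec hP μ
      have hd := dd_rec (dh := dh) hP μ
      have hAB := ih ρ0 (mem_prox.mp hρ0).1 ν0 hpr
      obtain ⟨hA, hB⟩ := hAB
      rw [hs, Finset.sum_pair (ne_of_lt hlt)] at hk hd
      have hkν0 := kk_ge_one hP ν0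
      have hkρ0 := kk_ge_one hP ρ0
      have hdν0 := dd_ge_one hP hds ν0
      have hdρ0 := dd_ge_one hP hds ρ0
      have hνeq : ν = ν0 ∨ ν = ρ0 := by
        rw [hs] at hν; simpa using hν
      rcases hνeq with h | h <;> subst h <;> constructor <;> nlinarith

end ProxSetting

namespace ProxSetting

variable {N : ℕ} {P : Matrix (Fin N) (Fin N) ℤ} {dh : Fin N → ℤ}

lemma M_symm (P : Matrix (Fin N) (Fin N) ℤ) (x y : Fin N) : (Pᵀ * P) x y = (Pᵀ * P) y x := by
  simp only [Matrix.mul_apply, Matrix.transpose_apply]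
  exact Finset.sum_congr rfl fun ρ _ => mul_comm _ _

lemma P_offdiag_mem (hP : IsProximityMatrix P) {ρ x : Fin N} (h : ρ ≠ x) :
    P ρ x = 0 ∨ P ρ x = -1 := by
  rcases lt_or_gt_of_ne h with hl | hg
  · exact Or.inl (hP.2.1 ρ x hl)
  · exact hP.2.2.1 ρ x hg

lemma M_structure (hP : IsProximityMatrix P) {x y : Fin N} (h : y < x) :
    (Pᵀ * P) x y = P x y ∨ ((Pᵀ * P) x y = P x y + 1 ∧ P x y = -1) := by
  have hM : (Pᵀ * P) x y = ∑ ρ, P ρ x * P ρ y := by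
    simp only [Matrix.mul_apply, Matrix.transpose_apply]
  have hxy : x ≠ y := ne_of_gt h
  have hsplit : ∑ ρ, P ρ x * P ρ y
      = P x x * P x y + P y x * P y y + ∑ ρ ∈ (univ.erase x).erase y, P ρ x * P ρ y := by
    rw [← Finset.add_sum_erase _ _ (mem_univ x)]
    rw [← Finset.add_sum_erase _ (fun ρ => P ρ x * P ρ y)
      (Finset.mem_erase.mpr ⟨ne_of_lt h, mem_univ y⟩)]
    ring
  have hyx0 : P y x = 0 := hP.2.1 y x h
  by_cases hex : ∃ ρ0 ∈ (univ.erase x).erase y, P ρ0 x = -1 ∧ P ρ0 y = -1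
  · obtain ⟨ρ0, hρ0mem, hρ0x, hρ0y⟩ := hex
    right
    have hpxy : P x y = -1 := hP.2.2.2.2.1 ρ0 y x h hρ0y hρ0x
    have htail : ∑ ρ ∈ (univ.erase x).erase y, P ρ x * P ρ y = 1 := by
      rw [Finset.sum_eq_single_of_mem ρ0 hρ0mem]
      · rw [hρ0x, hρ0y]; ring
      · intro ρ hρmem hρne
        rcases P_offdiag_mem hP (Finset.ne_of_mem_erase (Finset.mem_of_mem_erase hρmem))
          with h0 | hm1
        · rw [h0]; ring
        · rcases P_offdiag_mem hP (Finset.ne_of_mem_erase hρmem) with h0' | hm1'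
          · rw [h0']; ring
          · exact absurd (hP.2.2.2.2.2 y x ρ ρ0 h hm1' hm1 hρ0y hρ0x) hρne
    rw [hM, hsplit, htail, hyx0, hP.1]
    exact ⟨by ring, hpxy⟩
  · left
    have htail : ∑ ρ ∈ (univ.erase x).erase y, P ρ x * P ρ y = 0 := by
      apply Finset.sum_eq_zero
      intro ρ hρmem
      rcases P_offdiag_mem hP (Finset.ne_of_mem_erase (Finset.mem_of_mem_erase hρmem))
          with h0 | hm1
      · rw [h0]; ring
      · rcases P_offdiag_mem hP (Finset.ne_of_mem_erase hρmem) with h0' | hm1'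
        · rw [h0']; ring
        · exact absurd ⟨ρ, hρmem, hm1, hm1'⟩ hex
    rw [hM, hsplit, htail, hyx0, hP.1]
    ring

lemma M_offdiag (hP : IsProximityMatrix P) {x y : Fin N} (hxy : x ≠ y) :
    (Pᵀ * P) x y = 0 ∨ (Pᵀ * P) x y = -1 := by
  rcases lt_or_gt_of_ne hxy with hl | hg
  · rw [M_symm]
    rcases M_structure hP hl with h | ⟨h, hp⟩
    · rw [h]; exact P_offdiag_mem hP (ne_of_gt hl)
    · rw [h, hp]; left; ring
  · rcases M_structure hP hg with h | ⟨h, hp⟩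
    · rw [h]; exact P_offdiag_mem hP (ne_of_gt hg)
    · rw [h, hp]; left; ring

lemma adj_to_prox (hP : IsProximityMatrix P) {x y : Fin N} (h : (graph P).Adj x y)
    (hyx : y < x) : y ∈ prox P x := by
  obtain ⟨hne, hm⟩ := graph_adj.mp h
  rcases M_structure hP hyx with hst | ⟨hst, hp⟩
  · exact mem_prox.mpr ⟨hyx, by rw [← hst]; exact hm⟩
  · exact mem_prox.mpr ⟨hyx, hp⟩

/-- For adjacent vertices, the edge inequality -/
lemma adj_edge (hP : IsProximityMatrix P) (hdh : ∀ ν, 0 ≤ dh ν)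
    (hds : ∀ ν, 0 < dstar P dh ν) {x y : Fin N} (h : (graph P).Adj y x) :
    kk P x * dd P dh y < (kk P y + 1) * dd P dh x := by
  rcases lt_or_gt_of_ne (graph_adj.mp h).1 with hl | hg
  · exact (edge_ineq hP hdh hds x y (adj_to_prox hP h.symm hl)).1
  · exact (edge_ineq hP hdh hds y x (adj_to_prox hP h hg)).2

end ProxSetting

namespace ProxSetting

variable {N : ℕ} {P : Matrix (Fin N) (Fin N) ℤ} {dh : Fin N → ℤ}

def Nb (P : Matrix (Fin N) (Fin N) ℤ) (y : Fin N) : Finset (Fin N) :=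
  Finset.univ.filter fun μ => (graph P).Adj y μ

lemma mem_Nb {y μ : Fin N} : μ ∈ Nb P y ↔ (graph P).Adj y μ := by simp [Nb]

lemma sum_c (hP : IsProximityMatrix P) (c : Fin N → ℤ) (y : Fin N) :
    ∑ μ, c μ * (Pᵀ * P) μ y = (Pᵀ * P) y y * c y - ∑ μ ∈ Nb P y, c μ := by
  have hsplit : ∑ μ, c μ * (Pᵀ * P) μ y
      = c y * (Pᵀ * P) y y + ∑ μ ∈ univ.erase y, c μ * (Pᵀ * P) μ y := by
    rw [← Finset.add_sum_erase _ _ (mem_univ y)]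
  have htail : ∑ μ ∈ univ.erase y, c μ * (Pᵀ * P) μ y
      = ∑ μ ∈ univ.erase y, (if (graph P).Adj y μ then -c μ else 0) := by
    apply Finset.sum_congr rfl
    intro μ hμ
    have hne : μ ≠ y := Finset.ne_of_mem_erase hμ
    rcases M_offdiag hP hne with h0 | hm1
    · rw [h0, mul_zero, if_neg]
      intro hh
      obtain ⟨-, hadj⟩ := graph_adj.mp hh
      rw [M_symm] at hadj
      omega
    · rw [hm1, if_pos (graph_adj.mpr ⟨hne.symm, by rw [M_symm]; exact hm1⟩)]
      ring
  have hcount : ∑ μ ∈ univ.erase y, (if (graph P).Adj y μ then -c μ else 0)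
      = ∑ μ, (if (graph P).Adj y μ then -c μ else 0) := by
    rw [Finset.sum_erase]
    simp [(graph P).irrefl (v := y)]
  have hfin : ∑ μ, (if (graph P).Adj y μ then -c μ else 0) = -∑ μ ∈ Nb P y, c μ := by
    rw [Nb, ← Finset.sum_neg_distrib, ← Finset.sum_filter]
  rw [hsplit, htail, hcount, hfin]
  ring

lemma row_sum_P (hP : IsProximityMatrix P) (y : Fin N) :
    ∑ ρ, P ρ y = 2 - (Pᵀ * P) y y := by
  have hM : (Pᵀ * P) y y = ∑ ρ, P ρ y * P ρ y := by
    simp only [Matrix.mul_apply, Matrix.transpose_apply]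
  have h2 : ∑ ρ, (P ρ y + P ρ y * P ρ y) = 2 := by
    rw [Finset.sum_eq_single y]
    · rw [hP.1]; ring
    · intro ρ _ hρ
      rcases P_offdiag_mem hP hρ with h0 | hm1
      · rw [h0]; ring
      · rw [hm1]; ring
    · intro h; exact absurd (mem_univ y) h
  rw [Finset.sum_add_distrib] at h2
  rw [hM]
  linarith

lemma sum_kk_M (hP : IsProximityMatrix P) (y : Fin N) :
    ∑ μ, kk P μ * (Pᵀ * P) μ y = ∑ ρ, P ρ y := by
  have h1 : ∑ μ, kk P μ * (Pᵀ * P) μ y = ((Pᵀ * P) *ᵥ (P⁻¹ *ᵥ (fun _ => (1:ℤ)))) y := by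
    rw [Matrix.mulVec, dotProduct]
    apply Finset.sum_congr rfl
    intro μ _
    rw [M_symm P y μ, mul_comm]
    congr 1
    rw [Matrix.mulVec, dotProduct, kk]
    simp
  rw [h1, Matrix.mulVec_mulVec, Matrix.mul_assoc, PQ hP, Matrix.mul_one]
  rw [Matrix.mulVec, dotProduct]
  simp [Matrix.transpose_apply]

lemma sum_dd_M (hP : IsProximityMatrix P) (y : Fin N) :
    ∑ μ, dd P dh μ * (Pᵀ * P) μ y = dh y := by
  have h1 : ∑ μ, dd P dh μ * (Pᵀ * P) μ y = ((Pᵀ * P) *ᵥ (P⁻¹ *ᵥ (dstar P dh))) y := by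
    rw [Matrix.mulVec, dotProduct]
    apply Finset.sum_congr rfl
    intro μ _
    rw [M_symm P y μ, mul_comm]
    congr 1
    rw [Matrix.mulVec, dotProduct, dd]
    exact Finset.sum_congr rfl fun ρ _ => mul_comm _ _
  rw [h1, Matrix.mulVec_mulVec, Matrix.mul_assoc, PQ hP, Matrix.mul_one]
  have h2 : (Pᵀ *ᵥ dstar P dh) y = ∑ ρ, dstar P dh ρ * P ρ y := by
    rw [Matrix.mulVec, dotProduct]
    exact Finset.sum_congr rfl fun ρ _ => by rw [Matrix.transpose_apply, mul_comm]
  rw [h2]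
  have h3 : ∀ ρ, dstar P dh ρ = (dh ᵥ* P⁻¹) ρ := by
    intro ρ; rw [Matrix.vecMul, dotProduct, dstar]
  calc ∑ ρ, dstar P dh ρ * P ρ y = ((dh ᵥ* P⁻¹) ᵥ* P) y := by
        rw [Matrix.vecMul, dotProduct]
        exact Finset.sum_congr rfl fun ρ _ => by rw [h3]
  _ = (dh ᵥ* (P⁻¹ * P)) y := by rw [Matrix.vecMul_vecMul]
  _ = dh y := by rw [QP hP, Matrix.vecMul_one]

/-- The key identity at a vertex. -/
lemma key (hP : IsProximityMatrix P) (y : Fin N) :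
    ∑ μ ∈ Nb P y, ((kk P μ + 1) * dd P dh y - (kk P y + 1) * dd P dh μ)
      = dd P dh y * (((Nb P y).card : ℤ) - 2) + (kk P y + 1) * dh y := by
  set w : ℤ := (Pᵀ * P) y y with hw
  have hA : ∑ μ ∈ Nb P y, kk P μ = w * kk P y - (2 - w) := by
    have := sum_c hP (kk P) y
    rw [sum_kk_M hP, row_sum_P hP] at this
    linarith
  have hC : ∑ μ ∈ Nb P y, dd P dh μ = w * dd P dh y - dh y := by
    have := sum_c hP (dd P dh) y
    rw [sum_dd_M hP] at this
    linarith
  have hexp : ∑ μ ∈ Nb P y, ((kk P μ + 1) * dd P dh y - (kk P y + 1) * dd P dh μ)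
      = (∑ μ ∈ Nb P y, kk P μ + ((Nb P y).card : ℤ)) * dd P dh y
        - (kk P y + 1) * ∑ μ ∈ Nb P y, dd P dh μ := by
    rw [Finset.sum_sub_distrib, ← Finset.sum_mul, ← Finset.mul_sum]
    congr 2
    rw [Finset.sum_add_distrib]
    simp
  rw [hexp, hA, hC]
  ring

end ProxSetting

namespace ProxSetting

variable {N : ℕ} {P : Matrix (Fin N) (Fin N) ℤ}

lemma gamma_preconnected (hP : IsProximityMatrix P) [NeZero N] :
    (graph P).Preconnected := by
  classical
  intro μ ν
  by_contra hnr
  set R : Fin N → Prop := fun x => (graph P).Reachable μ x with hR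
  set G0 : Matrix (Fin N) (Fin N) ℤ := P⁻¹ * P⁻¹ᵀ with hG0
  have hMG : (Pᵀ * P) * G0 = 1 := by
    rw [hG0, Matrix.mul_assoc, ← Matrix.mul_assoc P, PQ hP, Matrix.one_mul,
      ← Matrix.transpose_mul, QP hP, Matrix.transpose_one]
  have hconn : ∀ x z : Fin N, (Pᵀ * P) x z ≠ 0 → (R x ↔ R z) := by
    intro x z hMxz
    by_cases hxz : x = z
    · rw [hxz]
    · rcases M_offdiag hP hxz with h0 | hm1
      · exact absurd h0 hMxz
      · have hadj : (graph P).Adj x z := graph_adj.mpr ⟨hxz, hm1⟩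
        constructor
        · intro h; exact h.trans hadj.reachable
        · intro h; exact h.trans hadj.symm.reachable
  set Nm : Matrix (Fin N) (Fin N) ℤ :=
    Matrix.of (fun x y => if (R x ↔ R y) then G0 x y else 0) with hNm
  have hMN : (Pᵀ * P) * Nm = 1 := by
    ext x y
    rw [Matrix.mul_apply]
    by_cases hxy : R x ↔ R y
    · have : ∀ z, (Pᵀ * P) x z * Nm z y = (Pᵀ * P) x z * G0 z y := by
        intro z
        by_cases hz : (Pᵀ * P) x z = 0
        · rw [hz, zero_mul, zero_mul]
        · have : R z ↔ R y := (hconn x z hz).symm.trans hxy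
          simp only [hNm, Matrix.of_apply, if_pos this]
      rw [Finset.sum_congr rfl (fun z _ => this z), ← Matrix.mul_apply, hMG]
    · have hxyne : x ≠ y := by rintro rfl; exact hxy Iff.rfl
      have : ∀ z, (Pᵀ * P) x z * Nm z y = 0 := by
        intro z
        by_cases hz : (Pᵀ * P) x z = 0
        · rw [hz, zero_mul]
        · have hzx : R x ↔ R z := hconn x z hz
          have : ¬(R z ↔ R y) := fun h => hxy (hzx.trans h)
          simp only [hNm, Matrix.of_apply, if_neg this, mul_zero]
      rw [Finset.sum_eq_zero (fun z _ => this z), Matrix.one_apply_ne hxyne]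
  have hGN : G0 = Nm := by
    calc G0 = G0 * 1 := (Matrix.mul_one G0).symm
    _ = G0 * ((Pᵀ * P) * Nm) := by rw [hMN]
    _ = (G0 * (Pᵀ * P)) * Nm := (Matrix.mul_assoc G0 (Pᵀ * P) Nm).symm
    _ = 1 * Nm := by rw [mul_eq_one_comm.mp hMG]
    _ = Nm := Matrix.one_mul Nm
  have hμν0 : G0 μ ν = 0 := by
    rw [hGN]
    have hRμ : R μ := SimpleGraph.Reachable.refl μ
    have : ¬(R μ ↔ R ν) := by
      intro h
      exact hnr (h.mp hRμ)
    simp only [hNm, Matrix.of_apply, if_neg this]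
  have hμνpos : 1 ≤ G0 μ ν := by
    rw [hG0, Matrix.mul_apply]
    have hterm : (1:ℤ) ≤ P⁻¹ μ 0 * P⁻¹ᵀ 0 ν := by
      rw [Matrix.transpose_apply]
      exact one_le_mul_of_one_le_of_one_le (Q_zero_col hP μ) (Q_zero_col hP ν)
    calc (1:ℤ) ≤ P⁻¹ μ 0 * P⁻¹ᵀ 0 ν := hterm
    _ ≤ ∑ ρ, P⁻¹ μ ρ * P⁻¹ᵀ ρ ν := by
        apply Finset.single_le_sum (f := fun ρ => P⁻¹ μ ρ * P⁻¹ᵀ ρ ν) _ (mem_univ 0)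
        intro ρ _
        show 0 ≤ P⁻¹ μ ρ * P⁻¹ᵀ ρ ν
        rw [Matrix.transpose_apply]
        exact mul_nonneg (Q_nonneg hP μ ρ) (Q_nonneg hP ν ρ)
  omega

end ProxSetting

namespace ProxSetting

variable {N : ℕ} {P : Matrix (Fin N) (Fin N) ℤ} {dh : Fin N → ℤ}

/-- abbreviation for the candidate function -/
noncomputable def lamF (P : Matrix (Fin N) (Fin N) ℤ) (dh : Fin N → ℤ) (ν : Fin N) : ℚ :=
  ((kk P ν : ℚ) + 1) / (dd P dh ν : ℚ)

lemma dd_pos_q (hP : IsProximityMatrix P) (hds : ∀ ν, 0 < dstar P dh ν) (ν : Fin N) :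
    (0:ℚ) < (dd P dh ν : ℚ) := by
  have := dd_ge_one hP (dh := dh) hds ν
  exact_mod_cast (by omega : (0:ℤ) < dd P dh ν)

lemma lam_le_iff (hP : IsProximityMatrix P) (hds : ∀ ν, 0 < dstar P dh ν) (x y : Fin N) :
    lamF P dh x ≤ lamF P dh y ↔
      (kk P x + 1) * dd P dh y ≤ (kk P y + 1) * dd P dh x := by
  rw [lamF, lamF, div_le_div_iff₀ (dd_pos_q hP hds x) (dd_pos_q hP hds y)]
  constructor <;> intro h <;> exact_mod_cast h

lemma lam_eq_iff (hP : IsProximityMatrix P) (hds : ∀ ν, 0 < dstar P dh ν) (x y : Fin N) :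
    lamF P dh x = lamF P dh y ↔
      (kk P x + 1) * dd P dh y = (kk P y + 1) * dd P dh x := by
  rw [lamF, lamF, div_eq_div_iff (ne_of_gt (dd_pos_q hP hds x)) (ne_of_gt (dd_pos_q hP hds y))]
  constructor <;> intro h <;> exact_mod_cast h

lemma nb_bound (hP : IsProximityMatrix P) (hdh : ∀ ν, 0 ≤ dh ν)
    (hds : ∀ ν, 0 < dstar P dh ν) {y μ : Fin N} (h : μ ∈ Nb P y) :
    (kk P μ + 1) * dd P dh y - (kk P y + 1) * dd P dh μ ≤ dd P dh y - 1 := by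
  have := adj_edge hP hdh hds (mem_Nb.mp h)
  linarith

/-- the local structure lemma: a vertex cannot have two neighbours with smaller-or-equal
value, one strictly smaller. -/
lemma loc (hP : IsProximityMatrix P) (hdh : ∀ ν, 0 ≤ dh ν)
    (hds : ∀ ν, 0 < dstar P dh ν) {y x z : Fin N} (hxz : x ≠ z)
    (hx : (graph P).Adj y x) (hz : (graph P).Adj y z)
    (hlx : lamF P dh x < lamF P dh y) (hlz : lamF P dh z ≤ lamF P dh y) : False := by
  have hxNb : x ∈ Nb P y := mem_Nb.mpr hx
  have hzNb : z ∈ Nb P y := mem_Nb.mpr hz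
  set tv : Fin N → ℤ := fun μ => (kk P μ + 1) * dd P dh y - (kk P y + 1) * dd P dh μ with htv
  have hux : tv x < 0 := by
    have h1 : ¬ (lamF P dh y ≤ lamF P dh x) := not_le.mpr hlx
    rw [lam_le_iff hP hds] at h1
    simp only [htv]
    omega
  have huz : tv z ≤ 0 := by
    have h1 := (lam_le_iff hP hds z y).mp hlz
    simp only [htv]
    omega
  have hkey := key (dh := dh) hP y
  have hsplit : ∑ μ ∈ Nb P y, tv μ
      = tv x + (tv z + ∑ μ ∈ ((Nb P y).erase x).erase z, tv μ) := by
    rw [← Finset.add_sum_erase _ _ hxNb,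
      ← Finset.add_sum_erase _ _ (Finset.mem_erase.mpr ⟨(Ne.symm hxz), hzNb⟩)]
  have hbound : ∑ μ ∈ ((Nb P y).erase x).erase z, tv μ
      ≤ (((Nb P y).erase x).erase z).card • (dd P dh y - 1) := by
    apply Finset.sum_le_card_nsmul
    intro μ hμ
    exact nb_bound hP hdh hds (Finset.mem_of_mem_erase (Finset.mem_of_mem_erase hμ))
  have hcard : ((((Nb P y).erase x).erase z).card : ℤ) = ((Nb P y).card : ℤ) - 2 := by
    rw [Finset.card_erase_of_mem (Finset.mem_erase.mpr ⟨(Ne.symm hxz), hzNb⟩),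
      Finset.card_erase_of_mem hxNb]
    have h2 : 2 ≤ (Nb P y).card := by
      have : ({x, z} : Finset (Fin N)) ⊆ Nb P y := by
        intro u hu
        rcases Finset.mem_insert.mp hu with h | h
        · exact h ▸ hxNb
        · exact (Finset.mem_singleton.mp h) ▸ hzNb
      have := Finset.card_le_card this
      rwa [Finset.card_pair hxz] at this
    push_cast
    omega
  have hD := dd_ge_one hP hds y
  have hK := kk_ge_one hP y
  have hdhy := hdh y
  have hdeg2 : (2:ℤ) ≤ ((Nb P y).card : ℤ) := by
    have : ({x, z} : Finset (Fin N)) ⊆ Nb P y := by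
      intro u hu
      rcases Finset.mem_insert.mp hu with h | h
      · exact h ▸ hxNb
      · exact (Finset.mem_singleton.mp h) ▸ hzNb
    have := Finset.card_le_card this
    rw [Finset.card_pair hxz] at this
    exact_mod_cast this
  rw [hsplit] at hkey
  rw [nsmul_eq_mul, hcard] at hbound
  nlinarith [mul_nonneg (by linarith : (0:ℤ) ≤ kk P y + 1) hdhy,
    mul_nonneg (by linarith : (0:ℤ) ≤ ((Nb P y).card : ℤ) - 2) (by linarith : (0:ℤ) ≤ dd P dh y - 1)]

end ProxSetting

namespace ProxSetting

variable {N : ℕ} {P : Matrix (Fin N) (Fin N) ℤ} {dh : Fin N → ℤ}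

lemma asc (hP : IsProximityMatrix P) (hdh : ∀ ν, 0 ≤ dh ν)
    (hds : ∀ ν, 0 < dstar P dh ν) {a b : Fin N} (w : (graph P).Walk a b) :
    w.IsPath → ∀ p, (graph P).Adj p a → p ∉ w.support →
      lamF P dh p < lamF P dh a → lamF P dh a ≤ lamF P dh b := by
  induction w with
  | nil => intro _ p _ _ _; exact le_refl _
  | @cons a c b h w' ih =>
    intro hw p hpa hps hpl
    have hpath' : w'.IsPath := hw.of_cons
    have hanotin : a ∉ w'.support := (SimpleGraph.Walk.cons_isPath_iff h w').mp hw |>.2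
    have hpc : p ≠ c := by
      intro heq
      apply hps
      rw [SimpleGraph.Walk.support_cons, heq]
      exact List.mem_cons_of_mem _ w'.start_mem_support
    have hc : lamF P dh a < lamF P dh c := by
      by_contra hle
      push_neg at hle
      exact loc hP hdh hds hpc hpa.symm h (by exact hpl) hle
    have := ih hpath' a h hanotin hc
    exact le_trans (le_of_lt hc) this

lemma path_in_S (hP : IsProximityMatrix P) (hdh : ∀ ν, 0 ≤ dh ν)
    (hds : ∀ ν, 0 < dstar P dh ν) (lct : ℚ) (hglobal : ∀ ν, lct ≤ lamF P dh ν)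
    {a b : Fin N} (w : (graph P).Walk a b) :
    w.IsPath → lamF P dh a = lct → lamF P dh b = lct →
      ∀ v ∈ w.support, lamF P dh v = lct := by
  induction w with
  | nil =>
    intro _ ha _ v hv
    rw [SimpleGraph.Walk.support_nil, List.mem_singleton] at hv
    rw [hv]; exact ha
  | @cons a c b h w' ih =>
    intro hw ha hb v hv
    have hpath' : w'.IsPath := hw.of_cons
    have hanotin : a ∉ w'.support := (SimpleGraph.Walk.cons_isPath_iff h w').mp hw |>.2
    have hc : lamF P dh c = lct := by
      by_contra hne
      have hlt : lct < lamF P dh c := lt_of_le_of_ne (hglobal c) (Ne.symm hne)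
      have := asc hP hdh hds w' hpath' a h hanotin (by rw [ha]; exact hlt)
      rw [hb] at this
      exact absurd (lt_of_lt_of_le hlt this) (lt_irrefl lct)
    rw [SimpleGraph.Walk.support_cons, List.mem_cons] at hv
    rcases hv with hv | hv
    · rw [hv]; exact ha
    · exact ih hpath' hc hb v hv

lemma induce_reach {Sset : Set (Fin N)} :
    ∀ {a b : Fin N} (w : (graph P).Walk a b), (∀ v ∈ w.support, v ∈ Sset) →
      ∀ (ha : a ∈ Sset) (hb : b ∈ Sset),
      ((graph P).induce Sset).Reachable ⟨a, ha⟩ ⟨b, hb⟩ := by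
  intro a b w
  induction w with
  | nil =>
    intro _ ha hb
    exact SimpleGraph.Reachable.refl _
  | @cons a c b h w' ih =>
    intro hsup ha hb
    have hc : c ∈ Sset := hsup c (by rw [SimpleGraph.Walk.support_cons]; exact List.mem_cons_of_mem _ w'.start_mem_support)
    have hadj : ((graph P).induce Sset).Adj ⟨a, ha⟩ ⟨c, hc⟩ := by
      rw [SimpleGraph.induce]
      exact h
    have hsub : ∀ v ∈ w'.support, v ∈ Sset := fun v hv =>
      hsup v (by rw [SimpleGraph.Walk.support_cons]; exact List.mem_cons_of_mem _ hv)
    exact hadj.reachable.trans (ih hsub hc hb)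

end ProxSetting

namespace ProxSetting

variable {N : ℕ} {P : Matrix (Fin N) (Fin N) ℤ} {dh : Fin N → ℤ}

lemma deg_eq (P : Matrix (Fin N) (Fin N) ℤ) (γ : Fin N) :
    (graph P).degree γ = (Nb P γ).card := by
  rw [SimpleGraph.degree, SimpleGraph.neighborFinset_eq_filter, Nb]

end ProxSetting


/-- Corollary 4.5: the set of vertices computing the log canonical threshold is a chain,
its non-ends satisfy `d̂_γ = 0`, and each of its ends is a star or has `d̂_γ > 0`. -/
theorem statement_2 {N : ℕ} [NeZero N] (P : Matrix (Fin N) (Fin N) ℤ)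
    (hP : IsProximityMatrix P)
    (dh : Fin N → ℤ) (hdh : ∀ ν, 0 ≤ dh ν) (hds : ∀ ν, 0 < dstar P dh ν)
    (lct : ℚ)
    (hlct : lct = Finset.univ.inf'
      (Finset.univ_nonempty_iff.mpr ⟨⟨0, Nat.pos_of_ne_zero (NeZero.ne N)⟩⟩)
      (fun ν => ((kk P ν : ℚ) + 1) / (dd P dh ν : ℚ)))
    (S : Finset (Fin N))
    (hS : S = Finset.univ.filter fun γ => ((kk P γ : ℚ) + 1) / (dd P dh γ : ℚ) = lct) :
    ((graph P).induce (S : Set (Fin N))).Connected ∧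
    (∀ γ ∈ S, (S.filter fun ν => (graph P).Adj γ ν).card ≤ 2) ∧
    (∀ γ ∈ S, 2 ≤ (S.filter fun ν => (graph P).Adj γ ν).card → dh γ = 0) ∧
    (∀ γ ∈ S, (S.filter fun ν => (graph P).Adj γ ν).card ≤ 1 →
      3 ≤ (graph P).degree γ ∨ 0 < dh γ) := by
  have hlam_min : ∀ ν, lct ≤ lamF P dh ν := by
    intro ν
    rw [hlct]
    exact Finset.inf'_le _ (mem_univ ν)
  have hmemS : ∀ γ, γ ∈ S ↔ lamF P dh γ = lct := by
    intro γ
    rw [hS]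
    simp [lamF]
  have hSne : S.Nonempty := by
    obtain ⟨i, -, hi⟩ := Finset.exists_mem_eq_inf'
      (Finset.univ_nonempty_iff.mpr ⟨⟨0, Nat.pos_of_ne_zero (NeZero.ne N)⟩⟩)
      (fun ν => ((kk P ν : ℚ) + 1) / (dd P dh ν : ℚ))
    refine ⟨i, (hmemS i).mpr ?_⟩
    rw [lamF, hlct, ← hi]
  -- the common numeric setup for a vertex of S
  have main : ∀ γ ∈ S,
      dd P dh γ * (((Nb P γ).card : ℤ) - 2) + (kk P γ + 1) * dh γ
        ≤ (((Nb P γ).card : ℤ) - ((S.filter fun ν => (graph P).Adj γ ν).card : ℤ))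
            * (dd P dh γ - 1) ∧
      0 ≤ dd P dh γ * (((Nb P γ).card : ℤ) - 2) + (kk P γ + 1) * dh γ ∧
      ((S.filter fun ν => (graph P).Adj γ ν).card ≤ (Nb P γ).card) ∧
      (∀ μ ∈ Nb P γ,
        ((kk P μ + 1) * dd P dh γ - (kk P γ + 1) * dd P dh μ = 0) → μ ∈ S) := by
    intro γ hγ
    set tv : Fin N → ℤ :=
      fun μ => (kk P μ + 1) * dd P dh γ - (kk P γ + 1) * dd P dh μ with htvdef
    have hγlam : lamF P dh γ = lct := (hmemS γ).mp hγ
    have htv0 : ∀ μ, 0 ≤ tv μ := by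
      intro μ
      have h1 : lamF P dh γ ≤ lamF P dh μ := by rw [hγlam]; exact hlam_min μ
      have := (lam_le_iff hP hds γ μ).mp h1
      simp only [htvdef]
      omega
    have htvS' : ∀ μ, tv μ = 0 → μ ∈ S := by
      intro μ h0
      have : (kk P μ + 1) * dd P dh γ = (kk P γ + 1) * dd P dh μ := by
        simp only [htvdef] at h0; omega
      have := (lam_eq_iff hP hds μ γ).mpr this
      exact (hmemS μ).mpr (this.trans hγlam)
    have htvS : ∀ μ ∈ S, tv μ = 0 := by
      intro μ hμ
      have : lamF P dh μ = lamF P dh γ := ((hmemS μ).mp hμ).trans hγlam.symm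
      have := (lam_eq_iff hP hds μ γ).mp this
      simp only [htvdef]
      omega
    set F : Finset (Fin N) := S.filter fun ν => (graph P).Adj γ ν with hFdef
    have hFsub : F ⊆ Nb P γ := by
      intro μ hμ
      exact mem_Nb.mpr (Finset.mem_filter.mp hμ).2
    have hkeyγ := key (dh := dh) hP γ
    have hsum_split : ∑ μ ∈ (Nb P γ) \ F, tv μ + ∑ μ ∈ F, tv μ = ∑ μ ∈ Nb P γ, tv μ :=
      Finset.sum_sdiff hFsub
    have hFzero : ∑ μ ∈ F, tv μ = 0 :=
      Finset.sum_eq_zero fun μ hμ => htvS μ (Finset.mem_filter.mp hμ).1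
    have hbnd : ∑ μ ∈ (Nb P γ) \ F, tv μ ≤ ((Nb P γ) \ F).card • (dd P dh γ - 1) := by
      apply Finset.sum_le_card_nsmul
      intro μ hμ
      exact nb_bound hP hdh hds (Finset.mem_sdiff.mp hμ).1
    have hcard : (((Nb P γ) \ F).card : ℤ) = ((Nb P γ).card : ℤ) - (F.card : ℤ) := by
      rw [Finset.card_sdiff_of_subset hFsub]
      have := Finset.card_le_card hFsub
      push_cast
      omega
    have hle : F.card ≤ (Nb P γ).card := Finset.card_le_card hFsub
    refine ⟨?_, ?_, hle, ?_⟩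
    · rw [← hkeyγ, ← hsum_split, hFzero, add_zero]
      rw [nsmul_eq_mul, hcard] at hbnd
      exact hbnd
    · rw [← hkeyγ, ← hsum_split, hFzero, add_zero]
      exact Finset.sum_nonneg fun μ _ => htv0 μ
    · intro μ _ h0
      exact htvS' μ h0
  -- part 2 : chain bound
  have part2 : ∀ γ ∈ S, (S.filter fun ν => (graph P).Adj γ ν).card ≤ 2 := by
    intro γ hγ
    by_contra hcon
    push_neg at hcon
    obtain ⟨hineq, hnn, hle, -⟩ := main γ hγ
    have hD := dd_ge_one hP hds γ
    have hK := kk_ge_one hP γ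
    have hdhγ := hdh γ
    have hba : ((S.filter fun ν => (graph P).Adj γ ν).card : ℤ) ≤ ((Nb P γ).card : ℤ) := by
      exact_mod_cast hle
    have hb3 : (3:ℤ) ≤ ((S.filter fun ν => (graph P).Adj γ ν).card : ℤ) := by
      exact_mod_cast hcon
    set a : ℤ := ((Nb P γ).card : ℤ)
    set b : ℤ := ((S.filter fun ν => (graph P).Adj γ ν).card : ℤ)
    nlinarith [mul_nonneg (by linarith : (0:ℤ) ≤ kk P γ + 1) hdhγ,
      mul_nonneg (by linarith : (0:ℤ) ≤ b - 2) (by linarith : (0:ℤ) ≤ dd P dh γ - 1)]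
  -- part 3
  have part3 : ∀ γ ∈ S, 2 ≤ (S.filter fun ν => (graph P).Adj γ ν).card → dh γ = 0 := by
    intro γ hγ h2
    obtain ⟨hineq, hnn, hle, -⟩ := main γ hγ
    have hD := dd_ge_one hP hds γ
    have hK := kk_ge_one hP γ
    have hdhγ := hdh γ
    have hba : ((S.filter fun ν => (graph P).Adj γ ν).card : ℤ) ≤ ((Nb P γ).card : ℤ) := by
      exact_mod_cast hle
    have hb2 : ((S.filter fun ν => (graph P).Adj γ ν).card : ℤ) = 2 := by
      have h2'' := part2 γ hγ
      have : (S.filter fun ν => (graph P).Adj γ ν).card = 2 := le_antisymm h2'' h2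
      exact_mod_cast this
    set a : ℤ := ((Nb P γ).card : ℤ)
    set b : ℤ := ((S.filter fun ν => (graph P).Adj γ ν).card : ℤ)
    have hdh0 : dh γ ≤ 0 := by nlinarith
    omega
  refine ⟨?_, part2, part3, ?_⟩
  -- part 1 : connectivity
  · rw [SimpleGraph.connected_iff]
    constructor
    · rintro ⟨x, hx⟩ ⟨y, hy⟩
      have hxS : x ∈ S := by exact_mod_cast hx
      have hyS : y ∈ S := by exact_mod_cast hy
      obtain ⟨w0⟩ := gamma_preconnected hP x y
      have hsup : ∀ v ∈ (w0.toPath : (graph P).Walk x y).support, v ∈ (S : Set (Fin N)) := by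
        intro v hv
        have := path_in_S hP hdh hds lct hlam_min _ w0.toPath.2
          ((hmemS x).mp hxS) ((hmemS y).mp hyS) v hv
        exact Finset.mem_coe.mpr ((hmemS v).mpr this)
      exact induce_reach _ hsup hx hy
    · obtain ⟨γ0, hγ0⟩ := hSne
      exact ⟨⟨γ0, Finset.mem_coe.mpr hγ0⟩⟩
  -- part 4
  · intro γ hγ hs1
    by_contra hcon
    push_neg at hcon
    obtain ⟨hdeg, hdh0⟩ := hcon
    have hdhγ0 : dh γ = 0 := by
      have := hdh γ; omega
    obtain ⟨hineq, hnn, hle, hforce⟩ := main γ hγ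
    have hD := dd_ge_one hP hds γ
    rw [deg_eq] at hdeg
    have hdeg2 : ((Nb P γ).card : ℤ) ≤ 2 := by exact_mod_cast Nat.lt_succ_iff.mp hdeg
    rw [hdhγ0, mul_zero, add_zero] at hnn
    have ha2 : ((Nb P γ).card : ℤ) = 2 := by nlinarith
    -- so the sum is zero, forcing every neighbour into S
    have hNbS : Nb P γ ⊆ S.filter fun ν => (graph P).Adj γ ν := by
      intro μ hμ
      have htv0 : ∀ μ' ∈ Nb P γ,
          0 ≤ (kk P μ' + 1) * dd P dh γ - (kk P γ + 1) * dd P dh μ' := by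
        intro μ' _
        have h1 : lamF P dh γ ≤ lamF P dh μ' := by
          rw [(hmemS γ).mp hγ]; exact hlam_min μ'
        have := (lam_le_iff hP hds γ μ').mp h1
        omega
      have hsumz : ∑ μ' ∈ Nb P γ, ((kk P μ' + 1) * dd P dh γ - (kk P γ + 1) * dd P dh μ')
          = 0 := by
        have hkeyγ := key (dh := dh) hP γ
        rw [hkeyγ, ha2, hdhγ0]
        ring
      have := (Finset.sum_eq_zero_iff_of_nonneg htv0).mp hsumz μ hμ
      exact Finset.mem_filter.mpr ⟨hforce μ hμ this, mem_Nb.mp hμ⟩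
    have : (2:ℕ) ≤ (S.filter fun ν => (graph P).Adj γ ν).card := by
      have hcc := Finset.card_le_card hNbS
      have : ((Nb P γ).card : ℤ) = 2 := ha2
      omega
    omega
end

section
/- Let γ ∈ {1,…,N} be a vertex with v(γ) + d̂_γ ≥ 3 (this holds in particular whenever v(γ) ≥ 3). Then there exists an antinef vector f ∈ ℤ^N with ξ_f = 1 − 1/d_γ and S_f = {γ}; that is, 1 − 1/d_γ is a jumping number supported exactly at γ. -/
open Matrix Finset

open ProxSetting Matrix Finset

/- ======================  Auxiliary development  ====================== -/

namespace ProxAux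

open ProxSetting Matrix Finset
open scoped Classical

variable {N : ℕ}

/-- strong induction on `Fin N`. -/
theorem finStrong {C : Fin N → Prop}
    (ih : ∀ a : Fin N, (∀ b : Fin N, b < a → C b) → C a) : ∀ a, C a := fun a =>
  (wellFounded_lt (α := Fin N)).induction a ih

section PFacts

variable (P : Matrix (Fin N) (Fin N) ℤ) (hP : IsProximityMatrix P)
include hP

/-- points proximate to `ν` (column set). -/
def rset (ν : Fin N) : Finset (Fin N) := univ.filter fun μ => P μ ν = -1

lemma Poff {μ ν : Fin N} (h : μ ≠ ν) : P μ ν = 0 ∨ P μ ν = -1 := by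
  rcases lt_or_gt_of_ne h with h' | h'
  · exact Or.inl (hP.2.1 μ ν h')
  · exact hP.2.2.1 μ ν h'

lemma mem_rset {μ ν : Fin N} (h : μ ∈ rset P ν) : ν < μ := by
  have hm : P μ ν = -1 := by simpa [rset] using h
  rcases lt_trichotomy ν μ with h' | h' | h'
  · exact h'
  · rw [← h', hP.1 ν] at hm; omega
  · rw [hP.2.1 μ ν h'] at hm; omega

lemma Pdet : P.det = 1 := by
  have : P.BlockTriangular OrderDual.toDual := fun i j hij => hP.2.1 i j hij
  rw [Matrix.det_of_lowerTriangular P this]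
  simp [hP.1]

lemma PisUnit : IsUnit P.det := by rw [Pdet P hP]; exact isUnit_one

lemma hPQe (a b : Fin N) :
    ∑ ρ, P a ρ * P⁻¹ ρ b = if a = b then 1 else 0 := by
  have := congrFun (congrFun (Matrix.mul_nonsing_inv P (PisUnit P hP)) a) b
  simpa [Matrix.mul_apply, Matrix.one_apply] using this

lemma hQPe (a b : Fin N) :
    ∑ ρ, P⁻¹ a ρ * P ρ b = if a = b then 1 else 0 := by
  have := congrFun (congrFun (Matrix.nonsing_inv_mul P (PisUnit P hP)) a) b
  simpa [Matrix.mul_apply, Matrix.one_apply] using this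

/-- row recursion for `Q = P⁻¹`. -/
lemma Qrec (a b : Fin N) :
    P⁻¹ a b = (if a = b then 1 else 0) + ∑ ρ ∈ univ.filter (fun ρ => P a ρ = -1), P⁻¹ ρ b := by
  have h := hPQe P hP a b
  rw [← Finset.sum_filter_add_sum_filter_not univ (fun ρ => P a ρ = -1)] at h
  have h1 : ∑ ρ ∈ univ.filter (fun ρ => P a ρ = -1), P a ρ * P⁻¹ ρ b
      = -∑ ρ ∈ univ.filter (fun ρ => P a ρ = -1), P⁻¹ ρ b := by
    rw [← Finset.sum_neg_distrib]
    refine Finset.sum_congr rfl fun ρ hρ => ?_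
    have : P a ρ = -1 := (Finset.mem_filter.mp hρ).2
    rw [this]; ring
  have h2 : ∑ ρ ∈ univ.filter (fun ρ => ¬ P a ρ = -1), P a ρ * P⁻¹ ρ b = P⁻¹ a b := by
    rw [Finset.sum_congr rfl (g := fun ρ => if ρ = a then P⁻¹ a b else 0) ?_]
    · rw [Finset.sum_ite_eq' (univ.filter fun ρ => ¬ P a ρ = -1) a (fun _ => P⁻¹ a b)]
      have : a ∈ univ.filter fun ρ => ¬ P a ρ = -1 := by
        simp [hP.1 a]
      simp [this]
    · intro ρ hρ
      have hne : ¬ P a ρ = -1 := (Finset.mem_filter.mp hρ).2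
      by_cases hr : ρ = a
      · subst hr; simp [hP.1 ρ]
      · have := Poff P hP (fun hh : a = ρ => hr hh.symm)
        rcases this with h0 | h0
        · simp [h0, hr]
        · exact absurd h0 hne
  rw [h1, h2] at h
  omega

lemma Qnonneg : ∀ a b : Fin N, 0 ≤ P⁻¹ a b := by
  intro a
  induction a using finStrong with
  | ih a IH =>
    intro b
    rw [Qrec P hP a b]
    have : 0 ≤ ∑ ρ ∈ univ.filter (fun ρ => P a ρ = -1), P⁻¹ ρ b := by
      refine Finset.sum_nonneg fun ρ hρ => ?_
      have hlt : ρ < a := by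
        have : P a ρ = -1 := (Finset.mem_filter.mp hρ).2
        rcases lt_trichotomy ρ a with h' | h' | h'
        · exact h'
        · subst h'; rw [hP.1 ρ] at this; omega
        · rw [hP.2.1 a ρ h'] at this; omega
      exact IH ρ hlt b
    split <;> omega

lemma Qtri : ∀ a b : Fin N, a < b → P⁻¹ a b = 0 := by
  intro a
  induction a using finStrong with
  | ih a IH =>
    intro b hab
    rw [Qrec P hP a b]
    have hne : ¬ (a = b) := ne_of_lt hab
    rw [if_neg hne]
    have : ∑ ρ ∈ univ.filter (fun ρ => P a ρ = -1), P⁻¹ ρ b = 0 := by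
      refine Finset.sum_eq_zero fun ρ hρ => ?_
      have hlt : ρ < a := by
        have : P a ρ = -1 := (Finset.mem_filter.mp hρ).2
        rcases lt_trichotomy ρ a with h' | h' | h'
        · exact h'
        · subst h'; rw [hP.1 ρ] at this; omega
        · rw [hP.2.1 a ρ h'] at this; omega
      exact IH ρ hlt b (lt_trans hlt hab)
    omega

lemma Qdiag (a : Fin N) : P⁻¹ a a = 1 := by
  rw [Qrec P hP a a, if_pos rfl]
  have : ∑ ρ ∈ univ.filter (fun ρ => P a ρ = -1), P⁻¹ ρ a = 0 := by
    refine Finset.sum_eq_zero fun ρ hρ => ?_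
    have hlt : ρ < a := by
      have : P a ρ = -1 := (Finset.mem_filter.mp hρ).2
      rcases lt_trichotomy ρ a with h' | h' | h'
      · exact h'
      · subst h'; rw [hP.1 ρ] at this; omega
      · rw [hP.2.1 a ρ h'] at this; omega
    exact Qtri P hP ρ a hlt
  omega

/-- multiplicativity: `Q_{aρ} ≥ Q_{aγ}·Q_{γρ}`. -/
lemma Qmul (γ : Fin N) : ∀ a ρ : Fin N, P⁻¹ a γ * P⁻¹ γ ρ ≤ P⁻¹ a ρ := by
  intro a
  induction a using finStrong with
  | ih a IH =>
    intro ρ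
    rcases lt_trichotomy a γ with hlt | heq | hgt
    · rw [Qtri P hP a γ hlt]
      simpa using Qnonneg P hP a ρ
    · subst heq; rw [Qdiag P hP a]; simp
    · have hrec1 := Qrec P hP a ρ
      have hrec2 := Qrec P hP a γ
      have hne : ¬ (a = γ) := ne_of_gt hgt
      rw [if_neg hne] at hrec2
      have key : ∑ σ ∈ univ.filter (fun σ => P a σ = -1), P⁻¹ σ γ * P⁻¹ γ ρ
          ≤ ∑ σ ∈ univ.filter (fun σ => P a σ = -1), P⁻¹ σ ρ := by
        refine Finset.sum_le_sum fun σ hσ => ?_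
        have hlt : σ < a := by
          have : P a σ = -1 := (Finset.mem_filter.mp hσ).2
          rcases lt_trichotomy σ a with h' | h' | h'
          · exact h'
          · subst h'; rw [hP.1 σ] at this; omega
          · rw [hP.2.1 a σ h'] at this; omega
        exact IH σ hlt ρ
      rw [← Finset.sum_mul] at key
      rw [zero_add] at hrec2
      rw [← hrec2] at key
      have h0 : 0 ≤ (if a = ρ then (1:ℤ) else 0) := by split <;> omega
      rw [hrec1]
      linarith


variable (dh : Fin N → ℤ)

lemma Pdstar (ν : Fin N) : ∑ ρ, dstar P dh ρ * P ρ ν = dh ν := by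
  have h1 : ∀ ρ, dstar P dh ρ * P ρ ν = ∑ μ, dh μ * (P⁻¹ μ ρ * P ρ ν) := by
    intro ρ
    rw [dstar, Finset.sum_mul]
    exact Finset.sum_congr rfl fun μ _ => mul_assoc _ _ _
  simp_rw [h1]
  rw [Finset.sum_comm]
  have h2 : ∀ μ, ∑ ρ, dh μ * (P⁻¹ μ ρ * P ρ ν) = dh μ * (if μ = ν then 1 else 0) := by
    intro μ
    rw [← Finset.mul_sum, hQPe P hP μ ν]
  simp_rw [h2, mul_ite, mul_one, mul_zero]
  simp

lemma Pdd (ρ : Fin N) : ∑ μ, dd P dh μ * P ρ μ = dstar P dh ρ := by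
  have h1 : ∀ μ, dd P dh μ * P ρ μ = ∑ σ, dstar P dh σ * (P ρ μ * P⁻¹ μ σ) := by
    intro μ
    rw [dd, Finset.sum_mul]
    exact Finset.sum_congr rfl fun σ _ => by ring
  simp_rw [h1]
  rw [Finset.sum_comm]
  have h2 : ∀ σ, ∑ μ, dstar P dh σ * (P ρ μ * P⁻¹ μ σ) = dstar P dh σ * (if ρ = σ then 1 else 0) := by
    intro σ
    rw [← Finset.mul_sum, hPQe P hP ρ σ]
  simp_rw [h2, mul_ite, mul_one, mul_zero]
  simp [eq_comm]

lemma Pkk (ρ : Fin N) : ∑ μ, kk P μ * P ρ μ = 1 := by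
  have h1 : ∀ μ, kk P μ * P ρ μ = ∑ σ, P ρ μ * P⁻¹ μ σ := by
    intro μ
    rw [kk, Finset.sum_mul]
    exact Finset.sum_congr rfl fun σ _ => by ring
  simp_rw [h1]
  rw [Finset.sum_comm]
  simp_rw [hPQe P hP ρ]
  simp

lemma PQg (γ ρ : Fin N) : ∑ μ, P⁻¹ μ γ * P ρ μ = if ρ = γ then 1 else 0 := by
  rw [← hPQe P hP ρ γ]
  exact Finset.sum_congr rfl fun μ _ => mul_comm _ _

omit hP in
lemma sumPtP (x : Fin N → ℤ) (ν : Fin N) :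
    ∑ μ, x μ * (Pᵀ * P) μ ν = ∑ ρ, (∑ μ, x μ * P ρ μ) * P ρ ν := by
  simp_rw [Matrix.mul_apply, Matrix.transpose_apply, Finset.mul_sum, Finset.sum_mul]
  rw [Finset.sum_comm]
  exact Finset.sum_congr rfl fun ρ _ => Finset.sum_congr rfl fun μ _ => by ring

omit hP in
lemma PtP_symm (μ ν : Fin N) : (Pᵀ * P) μ ν = (Pᵀ * P) ν μ := by
  simp only [Matrix.mul_apply, Matrix.transpose_apply]
  exact Finset.sum_congr rfl fun x _ => mul_comm _ _

lemma id_d (ν : Fin N) : ∑ μ, dd P dh μ * (Pᵀ * P) μ ν = dh ν := by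
  rw [sumPtP]
  simp_rw [Pdd P hP dh]
  exact Pdstar P hP dh ν

lemma id_k (ν : Fin N) : ∑ μ, kk P μ * (Pᵀ * P) μ ν = ∑ ρ, P ρ ν := by
  rw [sumPtP]
  simp_rw [Pkk P hP]
  simp

lemma id_Q (γ ν : Fin N) : ∑ μ, P⁻¹ μ γ * (Pᵀ * P) μ ν = P γ ν := by
  rw [sumPtP]
  simp_rw [PQg P hP γ]
  simp

lemma colsumP (ν : Fin N) : ∑ μ, P μ ν = 1 - (rset P ν).card := by
  rw [← Finset.sum_filter_add_sum_filter_not univ (fun μ => P μ ν = -1)]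
  have h1 : ∑ μ ∈ univ.filter (fun μ => P μ ν = -1), P μ ν = -(rset P ν).card := by
    rw [Finset.sum_congr rfl (g := fun _ => (-1 : ℤ)) (fun μ hμ => (Finset.mem_filter.mp hμ).2)]
    simp [rset, mul_comm]
  have h2 : ∑ μ ∈ univ.filter (fun μ => ¬ P μ ν = -1), P μ ν = 1 := by
    rw [Finset.sum_congr rfl (g := fun μ => if μ = ν then 1 else 0) ?_]
    · rw [Finset.sum_ite_eq' (univ.filter fun μ => ¬ P μ ν = -1) ν (fun _ => (1:ℤ))]
      have : ν ∈ univ.filter fun μ => ¬ P μ ν = -1 := by simp [hP.1 ν]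
      simp [this]
    · intro μ hμ
      have hne : ¬ P μ ν = -1 := (Finset.mem_filter.mp hμ).2
      by_cases hr : μ = ν
      · subst hr; simp [hP.1 μ]
      · rcases Poff P hP hr with h0 | h0
        · simp [h0, hr]
        · exact absurd h0 hne
  rw [h1, h2]; ring

lemma wght_eq (ν : Fin N) : wght P ν = 1 + (rset P ν).card := by
  unfold wght
  simp only [Matrix.mul_apply, Matrix.transpose_apply]
  rw [← Finset.sum_filter_add_sum_filter_not univ (fun μ => P μ ν = -1)]
  have h1 : ∑ μ ∈ univ.filter (fun μ => P μ ν = -1), P μ ν * P μ ν = (rset P ν).card := by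
    rw [Finset.sum_congr rfl (g := fun _ => (1 : ℤ)) ?_]
    · simp [rset]
    · intro μ hμ
      have : P μ ν = -1 := (Finset.mem_filter.mp hμ).2
      rw [this]; ring
  have h2 : ∑ μ ∈ univ.filter (fun μ => ¬ P μ ν = -1), P μ ν * P μ ν = 1 := by
    rw [Finset.sum_congr rfl (g := fun μ => if μ = ν then 1 else 0) ?_]
    · rw [Finset.sum_ite_eq' (univ.filter fun μ => ¬ P μ ν = -1) ν (fun _ => (1:ℤ))]
      have : ν ∈ univ.filter fun μ => ¬ P μ ν = -1 := by simp [hP.1 ν]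
      simp [this]
    · intro μ hμ
      have hne : ¬ P μ ν = -1 := (Finset.mem_filter.mp hμ).2
      by_cases hr : μ = ν
      · subst hr; simp [hP.1 μ]
      · rcases Poff P hP hr with h0 | h0
        · simp [h0, hr]
        · exact absurd h0 hne
  rw [h1, h2]; ring

lemma PtP_entry {μ ν : Fin N} (h : μ < ν) :
    (Pᵀ * P) μ ν = P ν μ + ((rset P μ) ∩ (rset P ν)).card := by
  simp only [Matrix.mul_apply, Matrix.transpose_apply]
  rw [← Finset.sum_filter_add_sum_filter_not univ
    (fun ρ => ρ ∈ (rset P μ) ∩ (rset P ν))]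
  have hfe : univ.filter (fun ρ => ρ ∈ (rset P μ) ∩ (rset P ν)) = (rset P μ) ∩ (rset P ν) := by
    ext ρ; simp
  have h1 : ∑ ρ ∈ univ.filter (fun ρ => ρ ∈ (rset P μ) ∩ (rset P ν)), P ρ μ * P ρ ν
      = ((rset P μ) ∩ (rset P ν)).card := by
    rw [Finset.sum_congr rfl (g := fun _ => (1 : ℤ)) ?_]
    · rw [hfe, Finset.sum_const]; simp
    · intro ρ hρ
      have := (Finset.mem_filter.mp hρ).2
      rw [Finset.mem_inter] at this
      have ha : P ρ μ = -1 := by simpa [rset] using this.1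
      have hb : P ρ ν = -1 := by simpa [rset] using this.2
      rw [ha, hb]; ring
  have h2 : ∑ ρ ∈ univ.filter (fun ρ => ¬ ρ ∈ (rset P μ) ∩ (rset P ν)), P ρ μ * P ρ ν
      = P ν μ := by
    rw [Finset.sum_congr rfl (g := fun ρ => if ρ = ν then P ν μ else 0) ?_]
    · rw [Finset.sum_ite_eq' _ ν (fun _ => P ν μ)]
      have hmem : ν ∈ univ.filter fun ρ => ¬ ρ ∈ (rset P μ) ∩ (rset P ν) := by
        simp [rset, hP.1 ν]
      rw [if_pos hmem]
    · intro ρ hρ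
      show P ρ μ * P ρ ν = if ρ = ν then P ν μ else 0
      have hρ2 : ¬ (P ρ μ = -1 ∧ P ρ ν = -1) := by
        have := (Finset.mem_filter.mp hρ).2
        simpa [rset] using this
      by_cases hrν : ρ = ν
      · subst hrν; rw [hP.1 ρ]; simp
      · rw [if_neg hrν]
        by_cases hrμ : ρ = μ
        · subst hrμ; rw [hP.1 ρ, hP.2.1 ρ ν h]; ring
        · rcases Poff P hP hrμ with ha | ha
          · rw [ha]; ring
          · rcases Poff P hP hrν with hb | hb
            · rw [hb]; ring
            · exact absurd ⟨ha, hb⟩ hρ2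
  rw [h1, h2]; ring

lemma inter_card {μ ν : Fin N} (h : μ < ν) : ((rset P μ) ∩ (rset P ν)).card ≤ 1 := by
  rw [Finset.card_le_one]
  intro a ha b hb
  rw [Finset.mem_inter] at ha hb
  have ha1 : P a μ = -1 := by simpa [rset] using ha.1
  have ha2 : P a ν = -1 := by simpa [rset] using ha.2
  have hb1 : P b μ = -1 := by simpa [rset] using hb.1
  have hb2 : P b ν = -1 := by simpa [rset] using hb.2
  exact hP.2.2.2.2.2 μ ν a b h ha1 ha2 hb1 hb2

lemma PtP_offdiag_lt {μ ν : Fin N} (h : μ < ν) :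
    (Pᵀ * P) μ ν = 0 ∨ (Pᵀ * P) μ ν = -1 := by
  rw [PtP_entry P hP h]
  have hle := inter_card P hP h
  interval_cases hc : ((rset P μ) ∩ (rset P ν)).card
  · rcases Poff P hP (ne_of_gt h) with h0 | h0 <;> simp [h0]
  · have hne : ((rset P μ) ∩ (rset P ν)).Nonempty := by
      rw [← Finset.card_pos, hc]; omega
    obtain ⟨ρ, hρ⟩ := hne
    rw [Finset.mem_inter] at hρ
    have ha : P ρ μ = -1 := by simpa [rset] using hρ.1
    have hb : P ρ ν = -1 := by simpa [rset] using hρ.2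
    have := hP.2.2.2.2.1 ρ μ ν h ha hb
    rw [this]; simp

lemma PtP_offdiag {μ ν : Fin N} (h : μ ≠ ν) :
    (Pᵀ * P) μ ν = 0 ∨ (Pᵀ * P) μ ν = -1 := by
  rcases lt_or_gt_of_ne h with h' | h'
  · exact PtP_offdiag_lt P hP h'
  · rw [PtP_symm]
    exact PtP_offdiag_lt P hP h'

lemma sum_S (S : Finset (Fin N)) (ν : Fin N) :
    ∑ μ ∈ S, (Pᵀ * P) μ ν
      = (if ν ∈ S then wght P ν else 0) - (S.filter (fun μ => (graph P).Adj ν μ)).card := by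
  have key : ∀ μ ∈ S, (Pᵀ * P) μ ν
      = (if μ = ν then wght P ν else 0) - (if (graph P).Adj ν μ then 1 else 0) := by
    intro μ _
    by_cases hμν : μ = ν
    · subst hμν
      have : ¬ (graph P).Adj μ μ := (graph P).loopless.irrefl μ
      simp [this, wght]
    · rw [if_neg hμν]
      by_cases hadj : (graph P).Adj ν μ
      · have : (Pᵀ * P) ν μ = -1 := hadj.2
        rw [PtP_symm, this, if_pos hadj]; ring
      · rcases PtP_offdiag P hP hμν with h0 | h0
        · rw [h0, if_neg hadj]; ring
        · exfalso
          exact hadj ⟨fun hh => hμν hh.symm, by rw [PtP_symm]; exact h0⟩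
  rw [Finset.sum_congr rfl key, Finset.sum_sub_distrib]
  congr 1
  · rw [Finset.sum_ite_eq' S ν (fun _ => wght P ν)]
  · rw [Finset.sum_ite, Finset.sum_const, Finset.sum_const]
    simp

lemma dh_rset_empty {ν : Fin N} (hr : rset P ν = ∅) : dh ν = dstar P dh ν := by
  rw [← Pdstar P hP dh ν]
  rw [Finset.sum_eq_single_of_mem ν (Finset.mem_univ ν)]
  · rw [hP.1 ν]; ring
  · intro b _ hb
    rcases Poff P hP hb with h0 | h0
    · rw [h0]; ring
    · exfalso
      have : b ∈ rset P ν := by simp [rset, h0]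
      rw [hr] at this; simp at this


lemma adj_max {x z : Fin N} (hz : z ∈ rset P x) (hmax : ∀ ρ ∈ rset P x, ρ ≤ z) :
    (graph P).Adj x z := by
  have hxz : x < z := mem_rset P hP hz
  refine ⟨ne_of_lt hxz, ?_⟩
  rw [PtP_entry P hP hxz]
  have hPzx : P z x = -1 := by simpa [rset] using hz
  have hcard : ((rset P x) ∩ (rset P z)).card = 0 := by
    rw [Finset.card_eq_zero, Finset.eq_empty_iff_forall_notMem]
    intro ρ hρ
    rw [Finset.mem_inter] at hρ
    have h1 := hmax ρ hρ.1
    have h2 := mem_rset P hP hρ.2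
    exact absurd h1 (not_le.mpr h2)
  rw [hPzx, hcard]
  simp

variable (hds : ∀ ν, 0 < dstar P dh ν)
include hds

lemma dd_ge_dstar (ν : Fin N) : dstar P dh ν ≤ dd P dh ν := by
  rw [dd]
  have h := Finset.single_le_sum (f := fun ρ => dstar P dh ρ * P⁻¹ ν ρ)
    (fun ρ _ => mul_nonneg (hds ρ).le (Qnonneg P hP ν ρ)) (Finset.mem_univ ν)
  simpa [Qdiag P hP ν] using h

lemma dd_pos (ν : Fin N) : 0 < dd P dh ν :=
  lt_of_lt_of_le (hds ν) (dd_ge_dstar P hP dh hds ν)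

lemma dd_ge_mul {γ ν : Fin N} (h : ν ≠ γ) :
    P⁻¹ ν γ * dd P dh γ + dstar P dh ν ≤ dd P dh ν := by
  have expand : P⁻¹ ν γ * dd P dh γ = ∑ ρ, dstar P dh ρ * (P⁻¹ ν γ * P⁻¹ γ ρ) := by
    rw [dd, Finset.mul_sum]
    exact Finset.sum_congr rfl fun ρ _ => by ring
  have hzero : P⁻¹ ν γ * P⁻¹ γ ν = 0 := by
    rcases lt_or_gt_of_ne h with h' | h'
    · rw [Qtri P hP ν γ h']; ring
    · rw [Qtri P hP γ ν h']; ring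
  rw [expand, dd]
  have hsplit : (∑ ρ, dstar P dh ρ * (P⁻¹ ν γ * P⁻¹ γ ρ)) + dstar P dh ν
      = ∑ ρ, (dstar P dh ρ * (P⁻¹ ν γ * P⁻¹ γ ρ) + if ρ = ν then dstar P dh ν else 0) := by
    rw [Finset.sum_add_distrib, Finset.sum_ite_eq' univ ν (fun _ => dstar P dh ν)]
    simp
  rw [hsplit]
  refine Finset.sum_le_sum fun ρ _ => ?_
  by_cases hρ : ρ = ν
  · subst hρ
    rw [if_pos rfl, hzero, Qdiag P hP ρ]
    simp
  · rw [if_neg hρ, add_zero]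
    exact mul_le_mul_of_nonneg_left (Qmul P hP γ ν ρ) (hds ρ).le

end PFacts


/-- the closure of the closed unit ball around `γ` under maximal proximate points. -/
inductive InC (P : Matrix (Fin N) (Fin N) ℤ) (γ : Fin N) : Fin N → Prop
  | self : InC P γ γ
  | base (ν : Fin N) : (graph P).Adj γ ν → InC P γ ν
  | step (x y : Fin N) : InC P γ x → y ∈ rset P x → (∀ ρ ∈ rset P x, ρ ≤ y) → InC P γ y


section Main

open scoped Classical

variable (P : Matrix (Fin N) (Fin N) ℤ) (dh : Fin N → ℤ) (γ : Fin N)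

/-- the constructed antinef divisor. -/
noncomputable def fvec : Fin N → ℤ :=
  fun μ => dd P dh μ - kk P μ - P⁻¹ μ γ - (if InC P γ μ then 1 else 0)

variable (hP : IsProximityMatrix P) (hdh : ∀ ν, 0 ≤ dh ν) (hds : ∀ ν, 0 < dstar P dh ν)

include hP

lemma fvec_gamma : fvec P dh γ γ = dd P dh γ - kk P γ - 2 := by
  unfold fvec
  rw [Qdiag P hP γ, if_pos InC.self]
  ring

include hdh hds in
lemma fvec_antinef (hγ : 3 ≤ ((graph P).degree γ : ℤ) + dh γ) : Antinef P (fvec P dh γ) := by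
  intro ν
  have hCfilter : ∑ μ, (if InC P γ μ then (1:ℤ) else 0) * (Pᵀ * P) μ ν
      = ∑ μ ∈ univ.filter (fun μ => InC P γ μ), (Pᵀ * P) μ ν := by
    rw [Finset.sum_filter]
    exact Finset.sum_congr rfl fun μ _ => by by_cases h : InC P γ μ <;> simp [h]
  have hexp : ∑ μ, fvec P dh γ μ * (Pᵀ * P) μ ν
      = (∑ μ, dd P dh μ * (Pᵀ * P) μ ν) - (∑ μ, kk P μ * (Pᵀ * P) μ ν)
        - (∑ μ, P⁻¹ μ γ * (Pᵀ * P) μ ν)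
        - ∑ μ, (if InC P γ μ then (1:ℤ) else 0) * (Pᵀ * P) μ ν := by
    rw [← Finset.sum_sub_distrib, ← Finset.sum_sub_distrib, ← Finset.sum_sub_distrib]
    refine Finset.sum_congr rfl fun μ _ => ?_
    unfold fvec
    ring
  rw [hexp, hCfilter, id_d P hP dh ν, id_k P hP ν, colsumP P hP ν, id_Q P hP γ ν,
    sum_S P hP (univ.filter (fun μ => InC P γ μ)) ν, wght_eq P hP ν]
  set r : ℕ := (rset P ν).card with hrdef
  set m : ℕ := ((univ.filter (fun μ => InC P γ μ)).filter (fun μ => (graph P).Adj ν μ)).card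
    with hmdef
  have hm0 : (0:ℤ) ≤ (m:ℤ) := Int.natCast_nonneg m
  have hdh0 : 0 ≤ dh ν := hdh ν
  by_cases hν : InC P γ ν
  · by_cases hνγ : ν = γ
    · subst hνγ
      have hmfull : (univ.filter (fun μ => InC P ν μ)).filter (fun μ => (graph P).Adj ν μ)
          = univ.filter (fun μ => (graph P).Adj ν μ) := by
        ext μ
        simp only [Finset.mem_filter, Finset.mem_univ, true_and]
        exact ⟨fun h => h.2, fun h => ⟨InC.base μ h, h⟩⟩
      have hdeg : ((graph P).degree ν : ℤ) = (m : ℤ) := by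
        have : (graph P).degree ν = m := by
          rw [hmdef, hmfull, SimpleGraph.degree]
          congr 1
          ext μ
          simp [SimpleGraph.mem_neighborFinset]
        rw [this]
      rw [if_pos (Finset.mem_filter.mpr ⟨Finset.mem_univ ν, hν⟩), hP.1 ν]
      rw [hdeg] at hγ
      linarith
    · have hγν : γ ≠ ν := fun h => hνγ h.symm
      have hwit : ∃ y, InC P γ y ∧ (graph P).Adj ν y ∧ (y = γ ∨ y < ν) := by
        cases hν with
        | self => exact absurd rfl hνγ
        | base _ hadj => exact ⟨γ, InC.self, (graph P).adj_symm hadj, Or.inl rfl⟩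
        | step x _ hx hmem hmax =>
            exact ⟨x, hx, (graph P).adj_symm (adj_max P hP hmem hmax), Or.inr (mem_rset P hP hmem)⟩
      obtain ⟨y, hyC, hyadj, hycase⟩ := hwit
      have hymem : y ∈ (univ.filter (fun μ => InC P γ μ)).filter
          (fun μ => (graph P).Adj ν μ) := by
        simp only [Finset.mem_filter, Finset.mem_univ, true_and]
        exact ⟨hyC, hyadj⟩
      have hm1 : (1:ℤ) ≤ (m:ℤ) := by
        have : 0 < m := Finset.card_pos.mpr ⟨y, hymem⟩
        exact_mod_cast this
      rw [if_pos (Finset.mem_filter.mpr ⟨Finset.mem_univ ν, hν⟩)]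
      by_cases hr : rset P ν = ∅
      · have hdh1 : 1 ≤ dh ν := by
          rw [dh_rset_empty P hP dh hr]
          exact hds ν
        have hr0 : (r:ℤ) = 0 := by
          rw [hrdef, hr]
          simp
        have hp : P γ ν ≤ 0 := by
          rcases Poff P hP hγν with h0 | h0 <;> omega
        linarith
      · have hne : (rset P ν).Nonempty := Finset.nonempty_iff_ne_empty.mpr hr
        have hzmem : (rset P ν).max' hne ∈ rset P ν := Finset.max'_mem _ hne
        have hzmax : ∀ ρ ∈ rset P ν, ρ ≤ (rset P ν).max' hne := fun ρ h =>
          Finset.le_max' _ ρ h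
        have hzadj : (graph P).Adj ν ((rset P ν).max' hne) := adj_max P hP hzmem hzmax
        have hzC : InC P γ ((rset P ν).max' hne) := InC.step ν _ hν hzmem hzmax
        by_cases hzγ : (rset P ν).max' hne = γ
        · have hpν : P γ ν = -1 := by
            rw [← hzγ]
            simpa [rset] using hzmem
          have hr1 : (1:ℤ) ≤ (r:ℤ) := by
            have : 0 < r := Finset.card_pos.mpr hne
            exact_mod_cast this
          rw [hpν]
          linarith
        · have hzmem2 : (rset P ν).max' hne ∈ (univ.filter (fun μ => InC P γ μ)).filter
              (fun μ => (graph P).Adj ν μ) := by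
            simp only [Finset.mem_filter, Finset.mem_univ, true_and]
            exact ⟨hzC, hzadj⟩
          have hyz : y ≠ (rset P ν).max' hne := by
            rcases hycase with rfl | hlt
            · exact fun h => hzγ h.symm
            · have hνz : ν < (rset P ν).max' hne := mem_rset P hP hzmem
              exact ne_of_lt (lt_trans hlt hνz)
          have hm2 : (2:ℤ) ≤ (m:ℤ) := by
            have : 1 < m := Finset.one_lt_card.mpr
              ⟨y, hymem, (rset P ν).max' hne, hzmem2, hyz⟩
            exact_mod_cast this
          have hp : P γ ν ≤ 0 := by
            rcases Poff P hP hγν with h0 | h0 <;> omega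
          have hr1 : (1:ℤ) ≤ (r:ℤ) := by
            have : 0 < r := Finset.card_pos.mpr hne
            exact_mod_cast this
          linarith
  · have hνγ : ν ≠ γ := fun h => hν (h ▸ InC.self)
    have hγν : γ ≠ ν := fun h => hνγ h.symm
    have hp : P γ ν ≤ 0 := by
      rcases Poff P hP hγν with h0 | h0 <;> omega
    have hnotmem : ν ∉ univ.filter (fun μ => InC P γ μ) := by
      simp [hν]
    rw [if_neg hnotmem]
    by_cases hr : rset P ν = ∅
    · have hdh1 : 1 ≤ dh ν := by
        rw [dh_rset_empty P hP dh hr]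
        exact hds ν
      have hr0 : (r:ℤ) = 0 := by
        rw [hrdef, hr]
        simp
      linarith
    · have hr1 : (1:ℤ) ≤ (r:ℤ) := by
        have : 0 < r := Finset.card_pos.mpr (Finset.nonempty_iff_ne_empty.mpr hr)
        exact_mod_cast this
      linarith

include hds in
lemma lam_strict {ν : Fin N} (h : ν ≠ γ) :
    lam P dh (fvec P dh γ γ) γ < lam P dh (fvec P dh γ ν) ν := by
  have hdγ : (0:ℤ) < dd P dh γ := dd_pos P hP dh hds γ
  have hdν : (0:ℤ) < dd P dh ν := dd_pos P hP dh hds ν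
  have hQd : P⁻¹ ν γ * dd P dh γ + dstar P dh ν ≤ dd P dh ν := dd_ge_mul P hP dh hds h
  have hsν : 0 < dstar P dh ν := hds ν
  set ε : ℤ := 1 - (if InC P γ ν then 1 else 0) with hεdef
  have hε : 0 ≤ ε := by
    rw [hεdef]
    split <;> omega
  have hnum : fvec P dh γ ν + kk P ν + 1 = dd P dh ν - P⁻¹ ν γ + ε := by
    unfold fvec
    rw [hεdef]
    ring
  have hint : (dd P dh γ - 1) * dd P dh ν < (dd P dh ν - P⁻¹ ν γ + ε) * dd P dh γ := by
    have hid : (dd P dh ν - P⁻¹ ν γ + ε) * dd P dh γ - (dd P dh γ - 1) * dd P dh ν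
        = (dd P dh ν - P⁻¹ ν γ * dd P dh γ) + ε * dd P dh γ := by
      ring
    have h1 : 0 ≤ ε * dd P dh γ := mul_nonneg hε hdγ.le
    linarith
  unfold lam
  rw [div_lt_div_iff₀ (by exact_mod_cast hdγ) (by exact_mod_cast hdν)]
  have hgnum : (fvec P dh γ γ : ℚ) + (kk P γ : ℚ) + 1 = ((dd P dh γ - 1 : ℤ) : ℚ) := by
    rw [fvec_gamma P dh γ hP]
    push_cast
    ring
  have hvnum : (fvec P dh γ ν : ℚ) + (kk P ν : ℚ) + 1
      = ((dd P dh ν - P⁻¹ ν γ + ε : ℤ) : ℚ) := by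
    rw [← hnum]
    push_cast
    ring
  rw [hgnum, hvnum]
  exact_mod_cast hint

include hds in
lemma xi_eq [NeZero N] :
    xiF P dh (fvec P dh γ) = lam P dh (fvec P dh γ γ) γ := by
  apply le_antisymm
  · exact Finset.inf'_le _ (Finset.mem_univ γ)
  · apply Finset.le_inf'
    intro ν _
    rcases eq_or_ne ν γ with rfl | h
    · exact le_refl _
    · exact (lam_strict P dh γ hP hds h).le

include hds in
lemma lam_gamma_val :
    lam P dh (fvec P dh γ γ) γ = 1 - 1 / (dd P dh γ : ℚ) := by
  have hdγ : (0:ℤ) < dd P dh γ := dd_pos P hP dh hds γ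
  have hdγ0 : (dd P dh γ : ℚ) ≠ 0 := by
    exact_mod_cast hdγ.ne'
  unfold lam
  rw [fvec_gamma P dh γ hP]
  push_cast
  field_simp
  ring

end Main

end ProxAux

/-- Corollary 4.10 b): if `v(γ) + d̂_γ ≥ 3`, then `1 − 1/d_γ` is a jumping number
supported exactly at `γ`. -/
theorem statement_4 {N : ℕ} [NeZero N] (P : Matrix (Fin N) (Fin N) ℤ)
    (hP : IsProximityMatrix P)
    (dh : Fin N → ℤ) (hdh : ∀ ν, 0 ≤ dh ν) (hds : ∀ ν, 0 < dstar P dh ν)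
    (γ : Fin N) (hγ : 3 ≤ ((graph P).degree γ : ℤ) + dh γ) :
    ∃ f : Fin N → ℤ, Antinef P f ∧
      xiF P dh f = 1 - 1 / (dd P dh γ : ℚ) ∧
      {ν | lam P dh (f ν) ν = xiF P dh f} = {γ} := by
  refine ⟨ProxAux.fvec P dh γ, ProxAux.fvec_antinef P dh γ hP hdh hds hγ, ?_, ?_⟩
  · rw [ProxAux.xi_eq P dh γ hP hds, ProxAux.lam_gamma_val P dh γ hP hds]
  · ext ν
    simp only [Set.mem_setOf_eq, Set.mem_singleton_iff]
    constructor
    · intro h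
      by_contra hne
      have hlt := ProxAux.lam_strict P dh γ hP hds hne
      rw [ProxAux.xi_eq P dh γ hP hds] at h
      exact absurd h (ne_of_gt hlt)
    · rintro rfl
      rw [ProxAux.xi_eq P dh ν hP hds]
end

section
/- Let f : V → ℤ and let γ ∈ V be a vertex such that f̂(γ) ≥ 0 and ξ := λ(f(γ),γ) ≤ λ(f(η),η) for every η ∼ γ. Then ξ·d̂(γ) ≥ f̂(γ) − v(γ) + 2. In particular: (a) if v(γ) ≤ 2 and d̂(γ) = 0, then γ has exactly two adjacent vertices, λ(f(η),η) = ξ for both of them, and f̂(γ) = 0; (b) if v(γ) = 1, then ξ·d̂(γ) ≥ f̂(γ) + 1, and in particular d̂(γ) > 0. -/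
open Finset

namespace TreeSetting

variable {V : Type*}

/-- `λ(a,ν) = (a + k(ν) + 1)/d(ν)`. -/
noncomputable def lam (k d : V → ℤ) (a : ℤ) (ν : V) : ℚ :=
  ((a : ℚ) + (k ν : ℚ) + 1) / (d ν : ℚ)

/-- `f̂(ν) = w(ν)·f(ν) − Σ_{μ∼ν} f(μ)`. -/
def hatf [Fintype V] [DecidableEq V] (G : SimpleGraph V) [DecidableRel G.Adj]
    (w : V → ℤ) (f : V → ℤ) (ν : V) : ℤ :=
  w ν * f ν - ∑ μ ∈ G.neighborFinset ν, f μ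

/-- `α(γ,ν) = k(ν) + 1 − d(ν)·(k(γ)+1)/d(γ)`. -/
noncomputable def alpha (k d : V → ℤ) (γ ν : V) : ℚ :=
  (k ν : ℚ) + 1 - (d ν : ℚ) * ((k γ : ℚ) + 1) / (d γ : ℚ)

end TreeSetting

open TreeSetting

/-- Lemma 3.1: if `f̂(γ) ≥ 0` and `ξ := λ(f(γ),γ)` is minimal among the neighbours of `γ`,
then `ξ·d̂(γ) ≥ f̂(γ) − v(γ) + 2`, with the particular cases (a) and (b). -/
theorem statement_7 {V : Type*} [Fintype V] [DecidableEq V] (G : SimpleGraph V)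
    [DecidableRel G.Adj] (hconn : G.Connected) (hacyc : G.IsAcyclic)
    (w k d dh : V → ℤ)
    (hw : ∀ ν, 1 ≤ w ν) (hk : ∀ ν, 1 ≤ k ν) (hd : ∀ ν, 1 ≤ d ν) (hdh : ∀ ν, 0 ≤ dh ν)
    (hreld : ∀ ν, w ν * d ν = dh ν + ∑ μ ∈ G.neighborFinset ν, d μ)
    (hrelk : ∀ ν, w ν * k ν = 2 - w ν + ∑ μ ∈ G.neighborFinset ν, k μ)
    (f : V → ℤ) (γ : V) (hf : 0 ≤ hatf G w f γ)
    (hmin : ∀ η, G.Adj γ η → lam k d (f γ) γ ≤ lam k d (f η) η) :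
    ((hatf G w f γ : ℚ) - (G.degree γ : ℚ) + 2 ≤ lam k d (f γ) γ * (dh γ : ℚ)) ∧
    (G.degree γ ≤ 2 → dh γ = 0 →
      G.degree γ = 2 ∧ (∀ η, G.Adj γ η → lam k d (f η) η = lam k d (f γ) γ) ∧
      hatf G w f γ = 0) ∧
    (G.degree γ = 1 →
      (hatf G w f γ : ℚ) + 1 ≤ lam k d (f γ) γ * (dh γ : ℚ) ∧ 0 < dh γ) := by
  classical
  set S := G.neighborFinset γ with hS
  set ξ := lam k d (f γ) γ with hξ
  have hdpos : ∀ ν : V, (0:ℚ) < (d ν : ℚ) := by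
    intro ν
    have : (1:ℚ) ≤ (d ν : ℚ) := by exact_mod_cast hd ν
    linarith
  have hξd : ξ * (d γ : ℚ) = (f γ : ℚ) + (k γ : ℚ) + 1 :=
    div_mul_cancel₀ _ (ne_of_gt (hdpos γ))
  have hle : ∀ η ∈ S, ξ * (d η : ℚ) ≤ (f η : ℚ) + (k η : ℚ) + 1 := by
    intro η hη
    have hadj : G.Adj γ η := by rwa [hS, SimpleGraph.mem_neighborFinset] at hη
    have h : ξ ≤ ((f η : ℚ) + (k η : ℚ) + 1) / (d η : ℚ) := hmin η hadj
    exact (le_div_iff₀ (hdpos η)).mp h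
  have hdhγ : (dh γ : ℚ) = (w γ : ℚ) * (d γ : ℚ) - ∑ η ∈ S, (d η : ℚ) := by
    have h := congrArg (Int.cast : ℤ → ℚ) (hreld γ)
    push_cast at h
    rw [hS]; linarith
  have hhat : (hatf G w f γ : ℚ) = (w γ : ℚ) * (f γ : ℚ) - ∑ η ∈ S, (f η : ℚ) := by
    unfold hatf; push_cast; rw [hS]
  have hkγ : (w γ : ℚ) * (k γ : ℚ) = 2 - (w γ : ℚ) + ∑ η ∈ S, (k η : ℚ) := by
    have h := congrArg (Int.cast : ℤ → ℚ) (hrelk γ)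
    push_cast at h
    rw [hS]; linarith
  have hdeg : (G.degree γ : ℚ) = (S.card : ℚ) := by
    rw [SimpleGraph.degree, hS]
  have hsumle : ∑ η ∈ S, ξ * (d η : ℚ) ≤ ∑ η ∈ S, ((f η : ℚ) + (k η : ℚ) + 1) :=
    Finset.sum_le_sum hle
  have hξdh : ξ * (dh γ : ℚ)
      = (w γ : ℚ) * ((f γ : ℚ) + (k γ : ℚ) + 1) - ∑ η ∈ S, ξ * (d η : ℚ) := by
    rw [hdhγ, mul_sub, Finset.mul_sum, ← hξd]; ring
  have hexp : ∑ η ∈ S, ((f η : ℚ) + (k η : ℚ) + 1)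
      = (∑ η ∈ S, (f η : ℚ)) + (∑ η ∈ S, (k η : ℚ)) + (S.card : ℚ) := by
    rw [Finset.sum_add_distrib, Finset.sum_add_distrib, Finset.sum_const,
      nsmul_eq_mul, mul_one]
  have hexp2 : (w γ : ℚ) * ((f γ : ℚ) + (k γ : ℚ) + 1)
      = (w γ : ℚ) * (f γ : ℚ) + (w γ : ℚ) * (k γ : ℚ) + (w γ : ℚ) := by ring
  have key : (hatf G w f γ : ℚ) - (G.degree γ : ℚ) + 2 ≤ ξ * (dh γ : ℚ) := by
    rw [hdeg]
    linarith
  have hfQ : (0:ℚ) ≤ (hatf G w f γ : ℚ) := by exact_mod_cast hf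
  refine ⟨key, ?_, ?_⟩
  · intro hd2 hdh0
    have hd2Q : (G.degree γ : ℚ) ≤ 2 := by exact_mod_cast hd2
    have hdh0Q : (dh γ : ℚ) = 0 := by exact_mod_cast hdh0
    rw [hdh0Q, mul_zero] at key
    have hdegeq : (G.degree γ : ℚ) = 2 := by linarith
    have hhat0 : (hatf G w f γ : ℚ) = 0 := by linarith
    have hdegN : G.degree γ = 2 := by exact_mod_cast hdegeq
    have hhat0Z : hatf G w f γ = 0 := by exact_mod_cast hhat0
    refine ⟨hdegN, ?_, hhat0Z⟩
    have hT : ∑ η ∈ S, ((f η : ℚ) + (k η : ℚ) + 1 - ξ * (d η : ℚ)) = 0 := by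
      rw [Finset.sum_sub_distrib, hexp]
      rw [hdh0Q, mul_zero] at hξdh
      rw [hdeg] at hdegeq
      linarith
    have hall := (Finset.sum_eq_zero_iff_of_nonneg
      (fun η hη => by have := hle η hη; linarith)).mp hT
    intro η hadj
    have hη : η ∈ S := by rw [hS, SimpleGraph.mem_neighborFinset]; exact hadj
    have h0 := hall η hη
    have heq : (f η : ℚ) + (k η : ℚ) + 1 = ξ * (d η : ℚ) := by linarith
    show ((f η : ℚ) + (k η : ℚ) + 1) / (d η : ℚ) = ξ
    rw [heq, mul_div_assoc, div_self (ne_of_gt (hdpos η)), mul_one]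
  · intro hdeg1
    have hdeg1Q : (G.degree γ : ℚ) = 1 := by exact_mod_cast hdeg1
    constructor
    · linarith
    · by_contra hpos
      have h0 : dh γ = 0 := le_antisymm (not_lt.mp hpos) (hdh γ)
      have h0Q : (dh γ : ℚ) = 0 := by exact_mod_cast h0
      rw [h0Q, mul_zero] at key
      linarith
end
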